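/- arXiv:0806.4139 — 6 statements merged into one kernel-verified Lean document; each statement's English description precedes it below -/
import Mathlib

section
/- If h ∈ C²(ℝ) is a bounded solution of h''(t) = W'(h(t)) for all t ∈ ℝ, then for every t ∈ ℝ one has −W(inf_ℝ h) = −W(sup_ℝ h) = |h'(t)|²/2 − W(h(t)). -/
/-!
Along a solution of `h'' = W'(h)` the energy `h'^2/2 - W(h)` is a constant `E`, so
`h'^2 = 2 (E + W(h))`. At `M = sup h`, a limit of values of `h`, this gives `E + W(M) ≥ 0`.
If `E + W(M) > 0`, then by continuity `|h'| ≥ r > 0` wherever `h` is close to `M`; a point where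
`h` is that close and moving up (or, reversing time, down) keeps moving monotonically with speed
at least `r` forever, so `h` is unbounded. Hence `-W(sup h) = E`, and the infimum follows by
applying this to `-h`, `W` being even.
-/

open Set Filter Topology

/-- A double-well potential as in the paper: `W ∈ C²`, even, `W(±1) = 0 ≤ W`,
`W''(0) ≠ 0`, `W''(±1) ≠ 0`, and `W'(s) = 0` iff `s ∈ {−1, 0, +1}`. -/
def DoubleWell (W : ℝ → ℝ) : Prop :=
  ContDiff ℝ 2 W ∧ (∀ r : ℝ, W (-r) = W r) ∧ W 1 = 0 ∧ W (-1) = 0 ∧ (∀ r : ℝ, 0 ≤ W r) ∧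
    deriv (deriv W) 0 ≠ 0 ∧ deriv (deriv W) 1 ≠ 0 ∧ deriv (deriv W) (-1) ≠ 0 ∧
    (∀ s : ℝ, deriv W s = 0 ↔ s = -1 ∨ s = 0 ∨ s = 1)

section Escape

variable {g : ℝ → ℝ} {a r s : ℝ}

lemma le_deriv_of_le_abs_deriv (hg : ContDiff ℝ 1 g) (hr : 0 < r)
    (hbig : ∀ u, a < g u → r ≤ |deriv g u|) (hs : a < g s) (hs' : 0 < deriv g s) :
    ∀ t, s ≤ t → r ≤ deriv g t := by
  obtain ⟨hgd, hgc⟩ := contDiff_one_iff_deriv.1 hg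
  have hle_of_pos : ∀ u, a < g u → 0 < deriv g u → r ≤ deriv g u := fun u hu hu' =>
    abs_of_pos hu' ▸ hbig u hu
  set S := {t | g s ≤ g t ∧ r ≤ deriv g t}
  have hS : IsClosed S :=
    (isClosed_le continuous_const hgd.continuous).inter (isClosed_le continuous_const hgc)
  have hstep : ∀ x ∈ S, S ∈ 𝓝[>] x := by
    rintro x ⟨hgx, hrx⟩
    obtain ⟨u, hxu, hpos⟩ : ∃ u, x < u ∧ Ico x u ⊆ {y | 0 < deriv g y} :=
      exists_Ico_subset_of_mem_nhds (hgc.isOpen_preimage _ isOpen_Ioi |>.mem_nhds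
        (hr.trans_le hrx)) ⟨x + 1, by linarith⟩
    have hmono : MonotoneOn g (Ico x u) :=
      monotoneOn_of_deriv_nonneg (convex_Ico x u) hgd.continuous.continuousOn
        hgd.differentiableOn fun y hy => (hpos (interior_subset hy)).le
    refine mem_of_superset (Ioo_mem_nhdsGT hxu) fun y hy => ?_
    have hgy : g s ≤ g y := hgx.trans (hmono ⟨le_rfl, hxu⟩ (Ioo_subset_Ico_self hy) hy.1.le)
    exact ⟨hgy, hle_of_pos y (hs.trans_le hgy) (hpos (Ioo_subset_Ico_self hy))⟩
  intro t hst
  exact ((hS.inter isClosed_Icc).Icc_subset_of_forall_mem_nhdsWithin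
    ⟨le_rfl, hle_of_pos s hs hs'⟩ (fun x hx => hstep x hx.1) ⟨hst, le_rfl⟩).2

lemma not_bddAbove_range_of_le_abs_deriv (hg : ContDiff ℝ 1 g) (hr : 0 < r)
    (hbig : ∀ u, a < g u → r ≤ |deriv g u|) (hs : a < g s) : ¬ BddAbove (range g) := by
  wlog hs' : 0 < deriv g s generalizing g s
  · have hne : deriv g s ≠ 0 := fun h0 => by simpa [h0, hr.not_ge] using hbig s hs
    have hrange : range (fun t => g (-t)) = range g := neg_surjective.range_comp g
    rw [← hrange]
    refine this (hg.comp contDiff_neg) (fun u hu => ?_) (s := -s) (by simpa using hs) ?_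
    · simpa [deriv_comp_neg] using hbig (-u) hu
    · rw [deriv_comp_neg, neg_neg]
      exact neg_pos.2 ((not_lt.1 hs').lt_of_ne hne)
  rintro ⟨B, hB⟩
  have hgrowth : ∀ t, s ≤ t → r * (t - s) ≤ g t - g s := fun t hst =>
    (convex_Ici s).mul_sub_le_image_sub_of_le_deriv hg.continuous.continuousOn
      (hg.differentiable one_ne_zero).differentiableOn
      (fun u hu => le_deriv_of_le_abs_deriv hg hr hbig hs hs' u (interior_subset hu))
      s self_mem_Ici t hst hst
  set t := s + (B - g s + 1) / r
  have hst : s ≤ t :=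
    le_add_of_nonneg_right (div_nonneg (by linarith [hB (mem_range_self s)]) hr.le)
  have ht : r * (t - s) = B - g s + 1 := by simp only [t, add_sub_cancel_left]; field_simp
  linarith [hgrowth t hst, hB (mem_range_self t)]

end Escape

noncomputable def energy (W h : ℝ → ℝ) (t : ℝ) : ℝ := deriv h t ^ 2 / 2 - W (h t)

section Energy

variable {W h : ℝ → ℝ}

lemma energy_const (hW : Differentiable ℝ W) (hh : ContDiff ℝ 2 h)
    (hode : ∀ t, deriv (deriv h) t = deriv W (h t)) (t t' : ℝ) :
    energy W h t = energy W h t' := by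
  have hderiv : ∀ u, HasDerivAt (energy W h) 0 u := fun u => by
    have := (((hh.differentiable_deriv_two u).hasDerivAt.pow 2).div_const 2).sub
      ((hW (h u)).hasDerivAt.comp u (hh.differentiable two_ne_zero u).hasDerivAt)
    exact (this : HasDerivAt (energy W h) _ u).congr_deriv (by rw [hode]; push_cast; ring)
  exact is_const_of_deriv_eq_zero (fun u => (hderiv u).differentiableAt)
    (fun u => (hderiv u).deriv) t t'

lemma energy_neg (hW : ∀ r, W (-r) = W r) : energy W (-h) = energy W h := by
  funext t
  simp only [energy, Pi.neg_apply, hW]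
  rw [show deriv (-h) t = -deriv h t from deriv.neg, neg_sq]

lemma neg_apply_sSup_range_eq {E : ℝ} (hW : Continuous W) (hh : ContDiff ℝ 1 h)
    (hbdd : BddAbove (range h)) (hE : ∀ t, energy W h t = E) : -W (sSup (range h)) = E := by
  set M := sSup (range h)
  have hsq : ∀ t, deriv h t ^ 2 = 2 * (E + W (h t)) := fun t => by
    rw [← hE t, energy]; ring
  have hcont : Continuous fun x => E + W x := continuous_const.add hW
  have hlow : 0 ≤ E + W M :=
    (isClosed_le continuous_const hcont).closure_subset_iff.2
      (range_subset_iff.2 fun t =>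
        show 0 ≤ E + W (h t) by linarith [hsq t, sq_nonneg (deriv h t)])
      (csSup_mem_closure (range_nonempty h) hbdd)
  have hup : E + W M ≤ 0 := by
    by_contra! hc
    obtain ⟨a, haM, ha⟩ : ∃ a < M, Ioc a M ⊆ {x | (E + W M) / 2 < E + W x} :=
      exists_Ioc_subset_of_mem_nhds ((isOpen_lt continuous_const hcont).mem_nhds
        (show (E + W M) / 2 < E + W M by linarith)) ⟨M - 1, by linarith⟩
    obtain ⟨_, ⟨s, rfl⟩, hs⟩ := exists_lt_of_lt_csSup (range_nonempty h) haM
    refine not_bddAbove_range_of_le_abs_deriv hh (Real.sqrt_pos.2 hc) (fun u hu => ?_) hs hbdd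
    have hu' : (E + W M) / 2 < E + W (h u) := ha ⟨hu, le_csSup hbdd (mem_range_self u)⟩
    rw [← Real.sqrt_sq_eq_abs, hsq]
    exact Real.sqrt_le_sqrt (by linarith)
  linarith

end Energy

/-- If `h ∈ C²(ℝ)` is a bounded solution of `h'' = W'(h)`, then for every `t`,
`−W(inf_ℝ h) = −W(sup_ℝ h) = |h'(t)|²/2 − W(h(t))`. -/
theorem first_integral_value (W h : ℝ → ℝ) (hW : DoubleWell W) (hh : ContDiff ℝ 2 h)
    (hbd : ∃ M : ℝ, ∀ t : ℝ, |h t| ≤ M)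
    (hode : ∀ t : ℝ, deriv (deriv h) t = deriv W (h t)) :
    ∀ t : ℝ, -W (sInf (Set.range h)) = (deriv h t) ^ 2 / 2 - W (h t) ∧
      -W (sSup (Set.range h)) = (deriv h t) ^ 2 / 2 - W (h t) := by
  intro t
  obtain ⟨hW2, hWeven, -⟩ := hW
  obtain ⟨M, hM⟩ := hbd
  have hbdd : ∀ g : ℝ → ℝ, (∀ u, |g u| ≤ M) → BddAbove (range g) := fun g hg =>
    ⟨M, forall_mem_range.2 fun u => (le_abs_self _).trans (hg u)⟩
  have hh1 : ContDiff ℝ 1 h := hh.of_le one_le_two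
  have hE : ∀ u, energy W h u = energy W h t :=
    fun u => energy_const (hW2.differentiable two_ne_zero) hh hode u t
  refine ⟨?_, neg_apply_sSup_range_eq hW2.continuous hh1 (hbdd h hM) hE⟩
  rw [← hWeven, ← Real.sSup_neg, neg_range']
  exact neg_apply_sSup_range_eq hW2.continuous hh1.neg (hbdd (-h) fun u => by simpa using hM u)
    fun u => by rw [energy_neg hWeven, hE]; rfl
end

section
/- Let h ∈ C²(ℝ) solve h''(t) = W'(h(t)) for all t ∈ ℝ. If h has two distinct critical points, i.e. h'(a) = h'(b) = 0 for some a < b, then h is periodic with period 2(b − a), i.e. h(t + 2(b−a)) = h(t) for all t ∈ ℝ. -/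
/-!
The equation `h'' = W'(h)` is autonomous and invariant under time reversal, so for a critical
point `c` the reflected function `t ↦ h (2c - t)` solves it with the same Cauchy data at `c`.
Since `W'` is locally Lipschitz, uniqueness makes `h` symmetric about every critical point, and
the composition of the reflections about `a` and `b` is the translation by `2(b - a)`.
-/

open Set Topology

variable {E : Type*} [NormedAddCommGroup E] [NormedSpace ℝ E]

/-- The agreement set of two solutions is open by local uniqueness and closed by continuity. -/
theorem ODE_solution_unique_of_locallyLipschitz {v : E → E} (hv : LocallyLipschitz v)
    {f g : ℝ → E} (hf : ∀ t, HasDerivAt f (v (f t)) t) (hg : ∀ t, HasDerivAt g (v (g t)) t)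
    {t₀ : ℝ} (heq : f t₀ = g t₀) : f = g := by
  have hfc : Continuous f := continuous_iff_continuousAt.2 fun t ↦ (hf t).continuousAt
  have hgc : Continuous g := continuous_iff_continuousAt.2 fun t ↦ (hg t).continuousAt
  have hopen : IsOpen {t | f t = g t} := by
    refine isOpen_iff_mem_nhds.2 fun t (ht : f t = g t) ↦ ?_
    obtain ⟨K, U, hU, hvU⟩ := hv (f t)
    have hfU : ∀ᶠ s in 𝓝 t, f s ∈ U := hfc.continuousAt hU
    have hgU : ∀ᶠ s in 𝓝 t, g s ∈ U := hgc.continuousAt (ht ▸ hU)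
    exact ODE_solution_unique_of_eventually (s := fun _ ↦ U) (.of_forall fun _ ↦ hvU)
      (hfU.mono fun s hs ↦ ⟨hf s, hs⟩) (hgU.mono fun s hs ↦ ⟨hg s, hs⟩) ht
  have hclopen : IsClopen {t | f t = g t} := ⟨isClosed_eq hfc hgc, hopen⟩
  exact funext (eq_univ_iff_forall.1 (hclopen.eq_univ ⟨t₀, heq⟩))

theorem ODE_solution_unique_second_order {F : E → E} (hF : LocallyLipschitz F)
    {x x' y y' : ℝ → E} (hx : ∀ t, HasDerivAt x (x' t) t) (hx' : ∀ t, HasDerivAt x' (F (x t)) t)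
    (hy : ∀ t, HasDerivAt y (y' t) t) (hy' : ∀ t, HasDerivAt y' (F (y t)) t)
    {t₀ : ℝ} (h₀ : x t₀ = y t₀) (h₁ : x' t₀ = y' t₀) : x = y := by
  have hv : LocallyLipschitz fun p : E × E ↦ (p.2, F p.1) :=
    LipschitzWith.prod_snd.locallyLipschitz.prodMk
      (hF.comp LipschitzWith.prod_fst.locallyLipschitz)
  have := ODE_solution_unique_of_locallyLipschitz hv (f := fun t ↦ (x t, x' t))
    (g := fun t ↦ (y t, y' t)) (fun t ↦ (hx t).prodMk (hx' t)) (fun t ↦ (hy t).prodMk (hy' t))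
    (Prod.ext h₀ h₁)
  funext t
  exact congrArg Prod.fst (congrFun this t)

theorem symmetric_about_of_deriv_eq_zero {F : E → E} (hF : LocallyLipschitz F)
    {x x' : ℝ → E} (hx : ∀ t, HasDerivAt x (x' t) t) (hx' : ∀ t, HasDerivAt x' (F (x t)) t)
    {c : ℝ} (hc : x' c = 0) (t : ℝ) : x (2 * c - t) = x t := by
  have hrefl (t : ℝ) : HasDerivAt (fun s : ℝ ↦ 2 * c - s) (-1) t :=
    (hasDerivAt_id t).const_sub (2 * c)
  have hy (t : ℝ) : HasDerivAt (fun s ↦ x (2 * c - s)) (-x' (2 * c - t)) t := by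
    simpa [Function.comp_def] using (hx (2 * c - t)).scomp t (hrefl t)
  have hy' (t : ℝ) : HasDerivAt (fun s ↦ -x' (2 * c - s)) (F (x (2 * c - t))) t := by
    simpa [Function.comp_def, Pi.neg_def] using ((hx' (2 * c - t)).scomp t (hrefl t)).neg
  have hcc : 2 * c - c = c := by ring
  have := ODE_solution_unique_second_order hF hy hy' hx hx' (t₀ := c) (by rw [hcc])
    (by rw [hcc, hc, neg_zero])
  exact congrFun this t

theorem periodic_of_two_critical_points_general (W h : ℝ → ℝ) (hW : ContDiff ℝ 2 W)
    (hh : ContDiff ℝ 2 h)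
    (hode : ∀ t : ℝ, deriv (deriv h) t = deriv W (h t))
    (a b : ℝ) (ha : deriv h a = 0) (hb : deriv h b = 0) :
    ∀ t : ℝ, h (t + 2 * (b - a)) = h t := by
  have hF : LocallyLipschitz (deriv W) := (hW.deriv' (n := 1)).locallyLipschitz
  have hh₁ (t : ℝ) : HasDerivAt h (deriv h t) t :=
    (hh.differentiable (by norm_num) t).hasDerivAt
  have hh₂ (t : ℝ) : HasDerivAt (deriv h) (deriv W (h t)) t :=
    hode t ▸ (hh.differentiable_deriv_two t).hasDerivAt
  intro t
  calc h (t + 2 * (b - a)) = h (2 * b - (2 * a - t)) := by ring_nf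
    _ = h (2 * a - t) := symmetric_about_of_deriv_eq_zero hF hh₁ hh₂ hb _
    _ = h t := symmetric_about_of_deriv_eq_zero hF hh₁ hh₂ ha t

/-- If `h ∈ C²(ℝ)` solves `h'' = W'(h)` on `ℝ` and has two distinct critical
points `a < b`, then `h` is periodic with period `2(b − a)`. -/
theorem periodic_of_two_critical_points (W h : ℝ → ℝ) (hW : ContDiff ℝ 2 W)
    (hh : ContDiff ℝ 2 h)
    (hode : ∀ t : ℝ, deriv (deriv h) t = deriv W (h t))
    (a b : ℝ) (hab : a < b) (ha : deriv h a = 0) (hb : deriv h b = 0) :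
    ∀ t : ℝ, h (t + 2 * (b - a)) = h t :=
  periodic_of_two_critical_points_general W h hW hh hode a b ha hb
end

section
/- Let h ∈ C²(ℝ) be a bounded solution of h''(t) = W'(h(t)) for all t ∈ ℝ. Suppose that h is either non-periodic, or that h is constant but not identically zero. Then W(inf_ℝ h) = W(sup_ℝ h) = 0. -/
open Set Filter Topology

theorem nonpos_of_tendsto_deriv_atTop {f : ℝ → ℝ} {B ℓ : ℝ} (hf : Differentiable ℝ f)
    (hB : ∀ t, f t ≤ B) (hℓ : Tendsto (deriv f) atTop (𝓝 ℓ)) : ℓ ≤ 0 := by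
  by_contra! hℓ_pos
  obtain ⟨T, hT⟩ := eventually_atTop.1 (hℓ.eventually_const_lt (half_lt_self hℓ_pos))
  have hgrowth : ∀ t, T ≤ t → ℓ / 2 * (t - T) ≤ f t - f T := fun t ht =>
    (convex_Ici T).mul_sub_le_image_sub_of_le_deriv hf.continuous.continuousOn
      hf.differentiableOn (fun x hx => (hT x (interior_subset hx)).le) T self_mem_Ici t ht ht
  set d := 2 * (B - f T + 1) / ℓ
  have hd : ℓ / 2 * d = B - f T + 1 := by
    simp only [d]
    field_simp
  have hd_nonneg : 0 ≤ d := div_nonneg (by linarith [hB T]) hℓ_pos.le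
  have hlarge := hgrowth (T + d) (le_add_of_nonneg_right hd_nonneg)
  rw [add_sub_cancel_left, hd] at hlarge
  linarith [hB (T + d)]

theorem eq_zero_of_tendsto_deriv_atTop {f : ℝ → ℝ} {B ℓ : ℝ} (hf : Differentiable ℝ f)
    (hB : ∀ t, |f t| ≤ B) (hℓ : Tendsto (deriv f) atTop (𝓝 ℓ)) : ℓ = 0 := by
  have hle := nonpos_of_tendsto_deriv_atTop hf (fun t => (abs_le.1 (hB t)).2) hℓ
  have hge := nonpos_of_tendsto_deriv_atTop hf.neg (fun t => neg_le.1 (abs_le.1 (hB t)).1)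
    (by simpa only [deriv.neg'] using hℓ.neg)
  linarith

theorem exists_tendsto_of_monotoneOn_Ici {f : ℝ → ℝ} {T B : ℝ} (hf : MonotoneOn f (Ici T))
    (hB : ∀ t, f t ≤ B) : ∃ L, Tendsto f atTop (𝓝 L) := by
  have hmono : Monotone fun t => f (max T t) := fun s t hst =>
    hf (le_max_left T s) (le_max_left T t) (max_le_max le_rfl hst)
  refine ⟨_, (tendsto_atTop_ciSup hmono ⟨B, ?_⟩).congr' ?_⟩
  · rintro _ ⟨t, rfl⟩
    exact hB _
  · filter_upwards [eventually_ge_atTop T] with t ht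
    rw [max_eq_right ht]

theorem strictMonoOn_Ici_of_deriv_pos {f : ℝ → ℝ} {T : ℝ} (hf : Differentiable ℝ f)
    (hpos : ∀ t, T ≤ t → 0 < deriv f t) : StrictMonoOn f (Ici T) :=
  strictMonoOn_of_deriv_pos (convex_Ici T) hf.continuous.continuousOn
    fun t ht => hpos t (interior_subset ht)

theorem deriv_pos_of_deriv_ne_zero {h : ℝ → ℝ} {t₀ : ℝ} (hh : Differentiable ℝ h)
    (hh' : Continuous (deriv h)) (hd : 0 < deriv h t₀)
    (hne : ∀ t, t₀ ≤ t → h t₀ ≤ h t → deriv h t ≠ 0) (t : ℝ) (ht : t₀ ≤ t) :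
    0 < deriv h t := by
  by_contra! hbad
  set Z := Ici t₀ ∩ deriv h ⁻¹' Iic 0
  have hZ : BddBelow Z := ⟨t₀, fun s hs => hs.1⟩
  have hτ : sInf Z ∈ Z :=
    (isClosed_Ici.inter (isClosed_Iic.preimage hh')).csInf_mem ⟨t, ht, hbad⟩ hZ
  have hbefore : ∀ s ∈ Ico t₀ (sInf Z), 0 < deriv h s := fun s hs =>
    not_le.1 fun hs' => (csInf_le hZ ⟨hs.1, hs'⟩).not_gt hs.2
  have hrise : h t₀ ≤ h (sInf Z) :=
    monotoneOn_of_deriv_nonneg (convex_Icc _ _) hh.continuous.continuousOn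
      hh.differentiableOn (fun s hs => by
        rw [interior_Icc] at hs
        exact (hbefore s ⟨hs.1.le, hs.2⟩).le)
      (left_mem_Icc.2 hτ.1) (right_mem_Icc.2 hτ.1) hτ.1
  have hτ_neg : deriv h (sInf Z) < 0 := lt_of_le_of_ne hτ.2 (hne _ hτ.1 hrise)
  obtain ⟨σ, hσ, hσ0⟩ :=
    intermediate_value_Icc' hτ.1 hh'.continuousOn ⟨hτ_neg.le, hd.le⟩
  rcases hσ.2.lt_or_eq with hlt | rfl
  · exact (hbefore σ ⟨hσ.1, hlt⟩).ne' hσ0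
  · exact hτ_neg.ne hσ0

section Energy

variable {V h : ℝ → ℝ} {B : ℝ}

theorem exists_abs_deriv_le (hV : Continuous V) (hB : ∀ t, |h t| ≤ B)
    (hE : ∀ t, deriv h t ^ 2 = V (h t)) : ∃ B', ∀ t, |deriv h t| ≤ B' := by
  obtain ⟨K, hK⟩ :=
    (isCompact_Icc : IsCompact (Icc (-B) B)).exists_bound_of_continuousOn hV.continuousOn
  refine ⟨√K, fun t => Real.abs_le_sqrt ?_⟩
  rw [hE]
  exact (le_abs_self _).trans (hK _ (abs_le.1 (hB t)))

theorem exists_tendsto_apply_eq_zero_of_deriv_pos {T : ℝ} (hV : Continuous V)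
    (hh : Differentiable ℝ h) (hB : ∀ t, |h t| ≤ B) (hE : ∀ t, deriv h t ^ 2 = V (h t))
    (hpos : ∀ t, T ≤ t → 0 < deriv h t) : ∃ L, Tendsto h atTop (𝓝 L) ∧ V L = 0 := by
  obtain ⟨L, hL⟩ := exists_tendsto_of_monotoneOn_Ici
    (strictMonoOn_Ici_of_deriv_pos hh hpos).monotoneOn fun t => (abs_le.1 (hB t)).2
  have hVL : Tendsto (fun t => V (h t)) atTop (𝓝 (V L)) := (hV.tendsto L).comp hL
  have hderiv : Tendsto (deriv h) atTop (𝓝 (√(V L))) := by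
    refine ((Real.continuous_sqrt.tendsto _).comp hVL).congr' ?_
    filter_upwards [eventually_ge_atTop T] with t ht
    rw [Function.comp_apply, ← hE, Real.sqrt_sq (hpos t ht).le]
  have hnonneg : 0 ≤ V L := ge_of_tendsto' hVL fun t => hE t ▸ sq_nonneg _
  have hsqrt : √(V L) = 0 := eq_zero_of_tendsto_deriv_atTop hh hB hderiv
  exact ⟨L, hL, le_antisymm (Real.sqrt_eq_zero'.1 hsqrt) hnonneg⟩

theorem deriv_nonpos_of_forall_pos_Ioc {M a t₀ : ℝ} (hV : Continuous V)
    (hh : Differentiable ℝ h) (hh' : Continuous (deriv h)) (hB : ∀ t, |h t| ≤ B)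
    (hE : ∀ t, deriv h t ^ 2 = V (h t)) (hM : ∀ t, h t ≤ M)
    (hVpos : ∀ s ∈ Ioc a M, 0 < V s) (ht₀ : a < h t₀) : deriv h t₀ ≤ 0 := by
  by_contra! hd
  have hpos : ∀ t, t₀ ≤ t → 0 < deriv h t :=
    deriv_pos_of_deriv_ne_zero hh hh' hd fun t _ hrise hzero => by
      have := hVpos (h t) ⟨ht₀.trans_le hrise, hM t⟩
      rw [← hE, hzero] at this
      simp at this
  obtain ⟨L, hL, hVL⟩ := exists_tendsto_apply_eq_zero_of_deriv_pos hV hh hB hE hpos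
  have hmono := strictMonoOn_Ici_of_deriv_pos hh hpos
  have hL_ge : h t₀ ≤ L := ge_of_tendsto hL <| by
    filter_upwards [eventually_ge_atTop t₀] with t ht
    exact hmono.monotoneOn self_mem_Ici ht ht
  exact (hVpos L ⟨ht₀.trans_le hL_ge, le_of_tendsto' hL hM⟩).ne' hVL

theorem apply_sSup_range_eq_zero (hV : Continuous V) (hh : Differentiable ℝ h)
    (hh' : Continuous (deriv h)) (hB : ∀ t, |h t| ≤ B) (hE : ∀ t, deriv h t ^ 2 = V (h t)) :
    V (sSup (range h)) = 0 := by
  have hbdd : BddAbove (range h) := ⟨B, forall_mem_range.2 fun t => (abs_le.1 (hB t)).2⟩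
  set M := sSup (range h)
  have hM : ∀ t, h t ≤ M := fun t => le_csSup hbdd (mem_range_self t)
  have hnonneg : 0 ≤ V M := by
    have hrange : range h ⊆ V ⁻¹' Ici 0 := range_subset_iff.2 fun t => by
      simpa only [mem_preimage, mem_Ici, ← hE] using sq_nonneg (deriv h t)
    exact closure_minimal hrange (isClosed_Ici.preimage hV)
      (csSup_mem_closure (range_nonempty h) hbdd)
  refine le_antisymm (not_lt.1 fun hpos => ?_) hnonneg
  obtain ⟨a, ha, hVpos⟩ := exists_Ioc_subset_of_mem_nhds
    (hV.continuousAt.eventually_const_lt hpos) ⟨M - 1, sub_one_lt M⟩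
  obtain ⟨_, ⟨t₀, rfl⟩, ht₀⟩ := exists_lt_of_lt_csSup (range_nonempty h) ha
  have hrev : deriv (fun t => h (-t)) = fun t => -deriv h (-t) := funext (deriv_comp_neg h)
  have hfwd := deriv_nonpos_of_forall_pos_Ioc hV hh hh' hB hE hM hVpos ht₀
  have hbwd := deriv_nonpos_of_forall_pos_Ioc (h := fun t => h (-t)) (t₀ := -t₀) hV
    (hh.comp differentiable_neg) (hrev ▸ (hh'.comp continuous_neg).neg) (fun t => hB (-t))
    (fun t => by rw [hrev, neg_sq]; exact hE (-t)) (fun t => hM (-t)) hVpos (by rwa [neg_neg])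
  simp only [hrev, neg_neg, neg_nonpos] at hbwd
  have := hVpos ⟨ht₀, hM t₀⟩
  rw [mem_ofPred_eq, ← hE, le_antisymm hfwd hbwd] at this
  simp at this

theorem apply_sInf_range_eq_zero (hV : Continuous V) (hh : Differentiable ℝ h)
    (hh' : Continuous (deriv h)) (hB : ∀ t, |h t| ≤ B) (hE : ∀ t, deriv h t ^ 2 = V (h t)) :
    V (sInf (range h)) = 0 := by
  have hsup := apply_sSup_range_eq_zero (V := fun s => V (-s)) (h := fun t => -h t)
    (hV.comp continuous_neg) hh.neg (by rw [deriv.fun_neg']; fun_prop)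
    (fun t => (abs_neg (h t)).trans_le (hB t))
    (fun t => by rw [deriv.fun_neg', neg_sq, neg_neg]; exact hE t)
  have hrange : range (fun t => -h t) = -range h := by
    ext x
    simp [neg_eq_iff_eq_neg]
  rwa [hrange, Real.sSup_neg, neg_neg] at hsup

end Energy

section Newton

variable {W h : ℝ → ℝ}

theorem exists_deriv_sq_eq_two_mul_add (hW : Differentiable ℝ W) (hh : Differentiable ℝ h)
    (hh' : Differentiable ℝ (deriv h)) (hode : ∀ t, deriv (deriv h) t = deriv W (h t)) :
    ∃ C, ∀ t, deriv h t ^ 2 = 2 * W (h t) + C := by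
  have hconst : ∀ t, HasDerivAt (fun t => deriv h t ^ 2 - 2 * W (h t)) 0 t := fun t => by
    refine (((hh' t).hasDerivAt.fun_pow 2).fun_sub
      (((hW (h t)).hasDerivAt.comp t (hh t).hasDerivAt).const_mul 2)).congr_deriv ?_
    rw [hode]
    ring
  refine ⟨deriv h 0 ^ 2 - 2 * W (h 0), fun t => ?_⟩
  have := is_const_of_deriv_eq_zero (fun t => (hconst t).differentiableAt)
    (fun t => (hconst t).deriv) t 0
  linarith

theorem eq_of_apply_eq_of_deriv_eq {k : ℝ → ℝ} {t₀ : ℝ} (hW : ContDiff ℝ 2 W)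
    (hh : ContDiff ℝ 2 h) (hk : ContDiff ℝ 2 k)
    (hodeh : ∀ t, deriv (deriv h) t = deriv W (h t))
    (hodek : ∀ t, deriv (deriv k) t = deriv W (k t)) (h₀ : h t₀ = k t₀)
    (h₁ : deriv h t₀ = deriv k t₀) : h = k := by
  set v : ℝ × ℝ → ℝ × ℝ := fun p => (p.2, deriv W p.1)
  have hv : LocallyLipschitz v :=
    (contDiff_snd.prodMk ((hW.deriv' (n := 1)).comp contDiff_fst)).locallyLipschitz
  have hphase : ∀ u : ℝ → ℝ, ContDiff ℝ 2 u →
      (∀ t, deriv (deriv u) t = deriv W (u t)) →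
      ∀ t, HasDerivAt (fun t => (u t, deriv u t)) (v (u t, deriv u t)) t := fun u hu hode t => by
    simpa only [v, hode] using ((hu.differentiable two_ne_zero t).hasDerivAt.prodMk
      (hu.differentiable_deriv_two t).hasDerivAt)
  funext t
  obtain ⟨a, b, ht, ht₀⟩ : ∃ a b, t ∈ Ioo a b ∧ t₀ ∈ Ioo a b :=
    ⟨min t t₀ - 1, max t t₀ + 1, by constructor <;> constructor <;> grind⟩
  obtain ⟨Rh, hRh⟩ := (isCompact_Icc : IsCompact (Icc a b)).exists_bound_of_continuousOn
    (HasDerivAt.continuousOn fun s _ => hphase h hh hodeh s)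
  obtain ⟨Rk, hRk⟩ := (isCompact_Icc : IsCompact (Icc a b)).exists_bound_of_continuousOn
    (HasDerivAt.continuousOn fun s _ => hphase k hk hodek s)
  obtain ⟨K, hK⟩ := hv.locallyLipschitzOn.exists_lipschitzOnWith_of_compact
    (isCompact_closedBall (0 : ℝ × ℝ) (max Rh Rk))
  have hmem : ∀ u : ℝ → ℝ, (∀ s ∈ Icc a b, ‖(u s, deriv u s)‖ ≤ max Rh Rk) →
      ∀ s ∈ Ioo a b, (u s, deriv u s) ∈ Metric.closedBall 0 (max Rh Rk) := fun u hu s hs =>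
    mem_closedBall_zero_iff.2 (hu s (Ioo_subset_Icc_self hs))
  have := ODE_solution_unique_of_mem_Ioo (v := fun _ => v) (fun _ _ => hK) ht₀
    (fun s hs => ⟨hphase h hh hodeh s,
      hmem h (fun s hs => (hRh s hs).trans (le_max_left _ _)) s hs⟩)
    (fun s hs => ⟨hphase k hk hodek s,
      hmem k (fun s hs => (hRk s hs).trans (le_max_right _ _)) s hs⟩)
    (Prod.ext h₀ h₁) ht
  exact congrArg Prod.fst this

theorem apply_two_mul_sub_eq_of_deriv_eq_zero {t₀ : ℝ} (hW : ContDiff ℝ 2 W)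
    (hh : ContDiff ℝ 2 h) (hode : ∀ t, deriv (deriv h) t = deriv W (h t))
    (ht₀ : deriv h t₀ = 0) (t : ℝ) : h (2 * t₀ - t) = h t := by
  have hrev : deriv (fun t => h (2 * t₀ - t)) = fun t => -deriv h (2 * t₀ - t) :=
    funext fun t => deriv_comp_const_sub ..
  have hk : ContDiff ℝ 2 fun t => h (2 * t₀ - t) := hh.comp (by fun_prop)
  refine congrFun (eq_of_apply_eq_of_deriv_eq (t₀ := t₀) hW hk hh (fun t => ?_) hode
    (by ring_nf) ?_) t
  · rw [hrev, deriv.fun_neg, deriv_comp_const_sub, neg_neg, hode]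
  · rw [hrev]
    simp [two_mul, ht₀]

theorem periodic_of_deriv_eq_zero {t₀ t₁ : ℝ} (hW : ContDiff ℝ 2 W) (hh : ContDiff ℝ 2 h)
    (hode : ∀ t, deriv (deriv h) t = deriv W (h t)) (ht₀ : deriv h t₀ = 0)
    (ht₁ : deriv h t₁ = 0) : Function.Periodic h (2 * (t₁ - t₀)) := fun t => by
  rw [← apply_two_mul_sub_eq_of_deriv_eq_zero hW hh hode ht₀ t,
    ← apply_two_mul_sub_eq_of_deriv_eq_zero hW hh hode ht₁ (t + 2 * (t₁ - t₀))]
  ring_nf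

end Newton

namespace DoubleWell

variable {W h : ℝ → ℝ}

theorem apply_le_apply_zero (hW : DoubleWell W) {s : ℝ} (hs : |s| ≤ 1) : W s ≤ W 0 := by
  obtain ⟨hC2, heven, hW1, -, hnonneg, -, -, -, hcrit⟩ := hW
  have hd : Differentiable ℝ W := hC2.differentiable two_ne_zero
  have hsign := hasDerivWithinAt_forall_lt_or_forall_gt_of_forall_ne (convex_Ioo (0 : ℝ) 1)
    (fun x _ => (hd x).hasDerivAt.hasDerivWithinAt) fun x hx hzero => by
      rcases (hcrit x).1 hzero with rfl | rfl | rfl <;> norm_num at hx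
  rw [interior_Icc.symm] at hsign
  rcases hsign with hneg | hpos
  · have hanti := strictAntiOn_of_deriv_neg (convex_Icc 0 1) hd.continuous.continuousOn hneg
    have habs : W |s| = W s := by
      rcases abs_choice s with hs' | hs' <;> rw [hs']
      exact heven s
    rw [← habs]
    exact hanti.antitoneOn (left_mem_Icc.2 zero_le_one) ⟨abs_nonneg s, hs⟩ (abs_nonneg s)
  · have := strictMonoOn_of_deriv_pos (convex_Icc 0 1) hd.continuous.continuousOn hpos
      (left_mem_Icc.2 zero_le_one) (right_mem_Icc.2 zero_le_one) one_pos
    linarith [hnonneg 0]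

theorem deriv_apply_neg (hW : DoubleWell W) (s : ℝ) : deriv W (-s) = -deriv W s := by
  obtain ⟨-, heven, -⟩ := hW
  have h := deriv_comp_neg W s
  simp only [heven] at h
  linarith

theorem not_forall_deriv_pos (hW : DoubleWell W) {B C T : ℝ} (hh : ContDiff ℝ 2 h)
    (hB : ∀ t, |h t| ≤ B)
    (hode : ∀ t, deriv (deriv h) t = deriv W (h t))
    (hE : ∀ t, deriv h t ^ 2 = 2 * W (h t) + C) (hC : C < 0) :
    ¬ ∀ t, T ≤ t → 0 < deriv h t := by
  intro hpos
  obtain ⟨hC2, -, hW1, hWm1, -, -, -, -, hcrit⟩ := id hW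
  have hV : Continuous fun s => 2 * W s + C := by
    have := hC2.continuous
    fun_prop
  obtain ⟨L, hL, hVL⟩ := exists_tendsto_apply_eq_zero_of_deriv_pos hV
    (hh.differentiable two_ne_zero) hB hE hpos
  obtain ⟨B', hB'⟩ := exists_abs_deriv_le hV hB hE
  have hcritL : deriv W L = 0 := by
    refine eq_zero_of_tendsto_deriv_atTop hh.differentiable_deriv_two hB' ?_
    exact (((hC2.continuous_deriv one_le_two).tendsto L).comp hL).congr fun t => (hode t).symm
  obtain rfl : L = 0 := by
    rcases (hcrit L).1 hcritL with rfl | rfl | rfl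
    · simp only [hWm1] at hVL
      linarith
    · rfl
    · simp only [hW1] at hVL
      linarith
  obtain ⟨t, hnear, ht⟩ := ((hL.eventually (Icc_mem_nhds (neg_lt_zero.2 one_pos) one_pos)).and
    (eventually_ge_atTop T)).exists
  have hmax := hW.apply_le_apply_zero (abs_le.2 hnear)
  nlinarith [hE t, hpos t ht]

theorem frequently_deriv_eq_zero (hW : DoubleWell W) {B C : ℝ} (hh : ContDiff ℝ 2 h)
    (hB : ∀ t, |h t| ≤ B)
    (hode : ∀ t, deriv (deriv h) t = deriv W (h t))
    (hE : ∀ t, deriv h t ^ 2 = 2 * W (h t) + C) (hC : C < 0) :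
    ∃ᶠ t in atTop, deriv h t = 0 := by
  obtain ⟨-, heven, -⟩ := id hW
  intro hne
  obtain ⟨T, hT⟩ := eventually_atTop.1 hne
  rcases hasDerivWithinAt_forall_lt_or_forall_gt_of_forall_ne (convex_Ici T)
    (fun t _ => (hh.differentiable two_ne_zero t).hasDerivAt.hasDerivWithinAt) hT with hneg | hpos
  · refine hW.not_forall_deriv_pos (h := fun t => -h t) (T := T) hh.neg
      (fun t => (abs_neg (h t)).trans_le (hB t)) (fun t => ?_) (fun t => ?_) hC
      fun t ht => ?_
    · rw [deriv.fun_neg', deriv.fun_neg, hode, hW.deriv_apply_neg]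
    · rw [deriv.fun_neg', neg_sq, heven]
      exact hE t
    · rw [deriv.fun_neg']
      exact neg_pos.2 (hneg t ht)
  · exact hW.not_forall_deriv_pos hh hB hode hE hC hpos

end DoubleWell

/-- Let `h ∈ C²(ℝ)` be a bounded solution of `h'' = W'(h)`. If `h` is either
non-periodic, or constant but not identically zero, then `W(inf_ℝ h) = W(sup_ℝ h) = 0`. -/
theorem potential_vanishes_at_extrema (W h : ℝ → ℝ) (hW : DoubleWell W) (hh : ContDiff ℝ 2 h)
    (hbd : ∃ M : ℝ, ∀ t : ℝ, |h t| ≤ M)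
    (hode : ∀ t : ℝ, deriv (deriv h) t = deriv W (h t))
    (hcase : (¬ ∃ T > (0 : ℝ), ∀ t : ℝ, h (t + T) = h t) ∨
      (∃ c : ℝ, c ≠ 0 ∧ ∀ t : ℝ, h t = c)) :
    W (sInf (Set.range h)) = 0 ∧ W (sSup (Set.range h)) = 0 := by
  obtain ⟨hW2, -, hW1, hWm1, hnonneg, -, -, -, hcrit⟩ := id hW
  rcases hcase with hnp | ⟨c, hc, hconst⟩
  · obtain ⟨B, hB⟩ := hbd
    have hd := hh.differentiable two_ne_zero
    have hd' := hh.continuous_deriv one_le_two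
    obtain ⟨C, hE⟩ := exists_deriv_sq_eq_two_mul_add (hW2.differentiable two_ne_zero) hd
      hh.differentiable_deriv_two hode
    have hV : Continuous fun s => 2 * W s + C := by
      have := hW2.continuous
      fun_prop
    have hsup := apply_sSup_range_eq_zero hV hd hd' hB hE
    have hinf := apply_sInf_range_eq_zero hV hd hd' hB hE
    obtain rfl : C = 0 := by
      refine le_antisymm (by linarith [hnonneg (sSup (range h))]) (not_lt.1 fun hC => hnp ?_)
      have hzeros := hW.frequently_deriv_eq_zero hh hB hode hE hC
      obtain ⟨t₀, ht₀⟩ := hzeros.exists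
      obtain ⟨t₁, ht₁, ht₁'⟩ := frequently_atTop.1 hzeros (t₀ + 1)
      exact ⟨2 * (t₁ - t₀), by linarith, periodic_of_deriv_eq_zero hW2 hh hode ht₀ ht₁'⟩
    constructor <;> linarith
  · obtain rfl : h = fun _ => c := funext hconst
    have hc' : deriv W c = 0 := by simpa using (hode 0).symm
    have hWc : W c = 0 := by
      rcases (hcrit c).1 hc' with rfl | rfl | rfl
      exacts [hWm1, absurd rfl hc, hW1]
    simp [range_const, hWc]
end

section
/- Let h ∈ C²(ℝ) solve h''(t) = W'(h(t)) for all t ∈ ℝ, with |h(t)| ≤ 1 for all t ∈ ℝ. If h is not periodic, then ∫_{−∞}^{+∞} |h'(t)| dt ≤ 4. -/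
/-!
The equation `h'' = W'(h)` is autonomous and time-reversible, so by uniqueness of solutions a
solution is symmetric about each of its critical points; two critical points `a < b` then make it
`2 (b - a)`-periodic. A non-periodic solution thus has at most one critical point, so on every
interval `[a, b]` it is monotone on at most two pieces, and on each piece `∫ |h'| = |Δh| ≤ 2`
because `|h| ≤ 1`.
-/

open MeasureTheory Set

/-- The phase-plane vector field of `x'' = f x`. -/
def phaseField (f : ℝ → ℝ) (p : ℝ × ℝ) : ℝ × ℝ := (p.2, f p.1)

theorem LipschitzOnWith.phaseField {f : ℝ → ℝ} {K : NNReal} {s : Set ℝ}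
    (hf : LipschitzOnWith K f s) : LipschitzOnWith (max 1 K) (phaseField f) (s ×ˢ univ) :=
  LipschitzWith.prod_snd.lipschitzOnWith.prodMk <| by
    have := hf.comp (LipschitzWith.prod_fst.lipschitzOnWith (s := s ×ˢ (univ : Set ℝ)))
      fun _ hp ↦ hp.1
    rwa [mul_one] at this

section SecondOrderODE

variable {f h : ℝ → ℝ} {s : Set ℝ} {K : NNReal}

theorem apply_sub_eq_apply_add_of_deriv_eq_zero (hf : LipschitzOnWith K f s)
    (hd : Differentiable ℝ h) (hd2 : ∀ t, HasDerivAt (deriv h) (f (h t)) t) (hs : ∀ t, h t ∈ s)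
    {t₀ : ℝ} (ht₀ : deriv h t₀ = 0) (t : ℝ) : h (t₀ - t) = h (t₀ + t) := by
  have hsol : ∀ t, HasDerivAt (fun u ↦ (h u, deriv h u)) (phaseField f (h t, deriv h t)) t :=
    fun t ↦ (hd t).hasDerivAt.prodMk (hd2 t)
  have hrev : ∀ t, HasDerivAt (fun u ↦ (h (2 * t₀ - u), -deriv h (2 * t₀ - u)))
      (phaseField f (h (2 * t₀ - t), -deriv h (2 * t₀ - t))) t := by
    intro t
    have hσ : HasDerivAt (fun u : ℝ ↦ 2 * t₀ - u) (-1) t := by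
      simpa using (hasDerivAt_id t).const_sub (2 * t₀)
    refine (((hd _).hasDerivAt.comp t hσ).prodMk ((hd2 _).comp t hσ).neg).congr_deriv ?_
    simp [phaseField]
  have heq := ODE_solution_unique_univ (v := fun _ ↦ phaseField f) (s := fun _ ↦ s ×ˢ univ)
    (t₀ := t₀) (fun _ ↦ hf.phaseField) (fun t ↦ ⟨hsol t, hs t, trivial⟩)
    (fun t ↦ ⟨hrev t, hs _, trivial⟩) (by simp [ht₀, two_mul])
  calc h (t₀ - t) = h (2 * t₀ - (t₀ + t)) := by ring_nf
    _ = h (t₀ + t) := (congrArg Prod.fst (congrFun heq (t₀ + t))).symm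

theorem periodic_of_deriv_eq_zero_s9 (hf : LipschitzOnWith K f s) (hd : Differentiable ℝ h)
    (hd2 : ∀ t, HasDerivAt (deriv h) (f (h t)) t) (hs : ∀ t, h t ∈ s) {a b : ℝ}
    (ha : deriv h a = 0) (hb : deriv h b = 0) : Function.Periodic h (2 * (b - a)) := fun t ↦
  calc h (t + 2 * (b - a)) = h (b + (t + b - 2 * a)) := by ring_nf
    _ = h (a + (a - t)) := by
      rw [← apply_sub_eq_apply_add_of_deriv_eq_zero hf hd hd2 hs hb]; ring_nf
    _ = h t := by rw [← apply_sub_eq_apply_add_of_deriv_eq_zero hf hd hd2 hs ha, sub_sub_cancel]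

theorem subsingleton_setOf_deriv_eq_zero (hf : LipschitzOnWith K f s) (hd : Differentiable ℝ h)
    (hd2 : ∀ t, HasDerivAt (deriv h) (f (h t)) t) (hs : ∀ t, h t ∈ s)
    (hnp : ¬ ∃ T > 0, Function.Periodic h T) : {t | deriv h t = 0}.Subsingleton := by
  intro a ha b hb
  by_contra hne
  rcases lt_or_gt_of_ne hne with hab | hab
  · exact hnp ⟨2 * (b - a), by linarith, periodic_of_deriv_eq_zero_s9 hf hd hd2 hs ha hb⟩
  · exact hnp ⟨2 * (a - b), by linarith, periodic_of_deriv_eq_zero_s9 hf hd hd2 hs hb ha⟩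

end SecondOrderODE

section TotalVariation

variable {g h : ℝ → ℝ} {a b : ℝ}

theorem ContinuousOn.nonneg_or_nonpos_of_ne_zero (hg : ContinuousOn g (Icc a b))
    (hz : ∀ t ∈ Ioo a b, g t ≠ 0) : (∀ t ∈ Icc a b, 0 ≤ g t) ∨ (∀ t ∈ Icc a b, g t ≤ 0) := by
  by_contra! hcon
  obtain ⟨⟨x, hx, hgx⟩, ⟨y, hy, hgy⟩⟩ := hcon
  obtain ⟨z, hz_mem, hz0⟩ : (0 : ℝ) ∈ g '' Ioo (min x y) (max x y) := by
    rcases le_total x y with hxy | hyx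
    · simpa [hxy] using intermediate_value_Ioo hxy (hg.mono (Icc_subset_Icc hx.1 hy.2)) ⟨hgx, hgy⟩
    · simpa [hyx] using intermediate_value_Ioo' hyx (hg.mono (Icc_subset_Icc hy.1 hx.2)) ⟨hgx, hgy⟩
  refine hz z ⟨?_, ?_⟩ hz0
  · exact (le_min hx.1 hy.1).trans_lt hz_mem.1
  · exact hz_mem.2.trans_le (max_le hx.2 hy.2)

theorem intervalIntegral.integral_abs_eq_abs_integral (hab : a ≤ b)
    (hg : (∀ t ∈ Icc a b, 0 ≤ g t) ∨ (∀ t ∈ Icc a b, g t ≤ 0)) :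
    ∫ t in a..b, |g t| = |∫ t in a..b, g t| := by
  rw [← uIcc_of_le hab] at hg
  rcases hg with hpos | hneg
  · rw [intervalIntegral.integral_congr fun t ht ↦ abs_of_nonneg (hpos t ht),
      abs_of_nonneg (intervalIntegral.integral_nonneg hab fun t ht ↦ hpos t (uIcc_of_le hab ▸ ht))]
  · rw [intervalIntegral.integral_congr fun t ht ↦ abs_of_nonpos (hneg t ht), ← abs_neg,
      ← intervalIntegral.integral_neg, abs_of_nonneg (intervalIntegral.integral_nonneg hab
        fun t ht ↦ neg_nonneg.mpr (hneg t (uIcc_of_le hab ▸ ht)))]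

theorem integral_abs_deriv_eq_abs_sub (hab : a ≤ b) (hd : Differentiable ℝ h)
    (hc : Continuous (deriv h)) (hz : ∀ t ∈ Ioo a b, deriv h t ≠ 0) :
    ∫ t in a..b, |deriv h t| = |h b - h a| := by
  rw [intervalIntegral.integral_abs_eq_abs_integral hab
      (hc.continuousOn.nonneg_or_nonpos_of_ne_zero hz),
    intervalIntegral.integral_deriv_eq_sub (fun t _ ↦ hd t) (hc.intervalIntegrable a b)]

theorem integral_abs_deriv_le_four (hd : Differentiable ℝ h) (hc : Continuous (deriv h))
    (hbd : ∀ t, |h t| ≤ 1) (hz : {t | deriv h t = 0}.Subsingleton) (hab : a ≤ b) :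
    ∫ t in a..b, |deriv h t| ≤ 4 := by
  have hosc : ∀ s t, |h t - h s| ≤ 2 := fun s t ↦
    (abs_sub _ _).trans (by linarith [hbd s, hbd t])
  by_cases h0 : ∃ c ∈ Ioo a b, deriv h c = 0
  · obtain ⟨c, hc_mem, hc0⟩ := h0
    have hne : ∀ t, t ≠ c → deriv h t ≠ 0 := fun t htc ht ↦ htc (hz ht hc0)
    rw [← intervalIntegral.integral_add_adjacent_intervals (hc.abs.intervalIntegrable a c)
        (hc.abs.intervalIntegrable c b),
      integral_abs_deriv_eq_abs_sub hc_mem.1.le hd hc fun t ht ↦ hne t ht.2.ne,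
      integral_abs_deriv_eq_abs_sub hc_mem.2.le hd hc fun t ht ↦ hne t ht.1.ne']
    linarith [hosc a c, hosc c b]
  · push Not at h0
    rw [integral_abs_deriv_eq_abs_sub hab hd hc h0]
    linarith [hosc a b]

theorem lintegral_ofReal_abs_le_of_intervalIntegral_le {C : ℝ} (hg : Continuous g)
    (hC : ∀ a b, a ≤ b → ∫ t in a..b, |g t| ≤ C) :
    ∫⁻ t, ENNReal.ofReal |g t| ≤ ENNReal.ofReal C := by
  have hcover : AECover volume Filter.atTop fun n : ℕ ↦ Ioc (-(n : ℝ)) n :=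
    aecover_Ioc (Filter.tendsto_neg_atTop_atBot.comp tendsto_natCast_atTop_atTop)
      tendsto_natCast_atTop_atTop
  rw [← hcover.iSup_lintegral_eq_of_countably_generated
    hg.abs.measurable.ennreal_ofReal.aemeasurable]
  refine iSup_le fun n ↦ ?_
  have hn : -(n : ℝ) ≤ n := neg_le_self n.cast_nonneg
  rw [← ofReal_integral_eq_lintegral_ofReal (hg.abs.integrableOn_Icc.mono_set Ioc_subset_Icc_self)
    (ae_of_all _ fun _ ↦ abs_nonneg _), ← intervalIntegral.integral_of_le hn]
  exact ENNReal.ofReal_le_ofReal (hC _ _ hn)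

end TotalVariation

/-- If `h ∈ C²(ℝ)` solves `h'' = W'(h)` with `|h| ≤ 1` and `h` is not
periodic, then `∫_{−∞}^{+∞} |h'(t)| dt ≤ 4`. -/
theorem integral_deriv_le_four (W h : ℝ → ℝ) (hW : DoubleWell W) (hh : ContDiff ℝ 2 h)
    (hbd : ∀ t : ℝ, |h t| ≤ 1)
    (hode : ∀ t : ℝ, deriv (deriv h) t = deriv W (h t))
    (hnp : ¬ ∃ T > (0 : ℝ), ∀ t : ℝ, h (t + T) = h t) :
    ∫⁻ t : ℝ, ENNReal.ofReal |deriv h t| ≤ 4 := by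
  have hh1 : Differentiable ℝ h := hh.differentiable two_ne_zero
  have hh' : ContDiff ℝ 1 (deriv h) := hh.deriv' (n := 1)
  have hode' : ∀ t, HasDerivAt (deriv h) (deriv W (h t)) t := fun t ↦
    hode t ▸ (hh'.differentiable one_ne_zero t).hasDerivAt
  obtain ⟨K, hK⟩ := (hW.1.deriv' (n := 1)).locallyLipschitz.locallyLipschitzOn
    |>.exists_lipschitzOnWith_of_compact (isCompact_Icc (a := -1) (b := 1))
  have hz := subsingleton_setOf_deriv_eq_zero hK hh1 hode' (fun t ↦ abs_le.mp (hbd t)) hnp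
  simpa using lintegral_ofReal_abs_le_of_intervalIntegral_le hh'.continuous
    fun a b hab ↦ integral_abs_deriv_le_four hh1 hh'.continuous hbd hz hab
end

section
/- Let h ∈ C²(ℝ) solve h''(t) = W'(h(t)) for all t ∈ ℝ, with |h(t)| ≤ 1 for all t ∈ ℝ, and suppose that h is NOT both periodic and non-constant. Let σ ∈ {inf_ℝ h, sup_ℝ h}. Then there exists a constant C > 0, depending only on W, such that ∫_{−∞}^{+∞} ( |h'(t)|²/2 + W(h(t)) − W(σ) ) dt ≤ C. -/
/-!
The energy `h'²/2 - W(h)` of a solution is a constant `K`, so `h'² = 2 (W(h) + K)`; since `h` is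
bounded, the mean value theorem bounds `K`, hence `|h'| ≤ B` with `B` depending only on `W`.
By uniqueness for the ODE, `h` is symmetric about every zero of `h'`, so two zeros of `h'` make `h`
periodic; thus a non-constant solution that is not periodic has a derivative vanishing at most
once. On each of the (at most two) intervals where `h'` has a constant sign,
`∫ h'² ≤ B ∫ |h'| = B |Δh| ≤ 2B`. Finally `W(σ) + K ≥ 0` because `σ` lies in the closure of the
range of `h`, so the integrand is at most `h'²`.
-/

open MeasureTheory

open Set Filter

section SecondOrderODE

variable {V V' F h h' : ℝ → ℝ}

theorem exists_sq_deriv_eq_of_hasDerivAt (hV : ∀ x, HasDerivAt V (V' x) x)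
    (hh : ∀ t, HasDerivAt h (h' t) t) (hh' : ∀ t, HasDerivAt h' (V' (h t)) t) :
    ∃ K, ∀ t, h' t ^ 2 = 2 * (V (h t) + K) := by
  have hE : ∀ t, HasDerivAt (fun t => h' t ^ 2 / 2 - V (h t)) 0 t := fun t => by
    refine ((((hh' t).fun_pow 2).div_const 2).fun_sub ((hV (h t)).comp t (hh t))).congr_deriv ?_
    ring
  refine ⟨h' 0 ^ 2 / 2 - V (h 0), fun t => ?_⟩
  linarith [is_const_of_deriv_eq_zero (fun t => (hE t).differentiableAt) (fun t => (hE t).deriv)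
    t 0]

theorem comp_reflect_eq_of_deriv_eq_zero {s : Set ℝ} {L : NNReal} (hF : LipschitzOnWith L F s)
    (hs : ∀ t, h t ∈ s) (hh : ∀ t, HasDerivAt h (h' t) t)
    (hh' : ∀ t, HasDerivAt h' (F (h t)) t) {t₀ : ℝ} (ht₀ : h' t₀ = 0) (t : ℝ) :
    h (2 * t₀ - t) = h t := by
  have hv : LipschitzOnWith (max 1 (L * 1)) (fun p : ℝ × ℝ => (p.2, F p.1)) (s ×ˢ univ) :=
    LipschitzWith.prod_snd.lipschitzOnWith.prodMk
      (hF.comp LipschitzWith.prod_fst.lipschitzOnWith fun _ hp => hp.1)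
  have hrefl : ∀ u, HasDerivAt (fun u => (h (2 * t₀ - u), -h' (2 * t₀ - u)))
      (-h' (2 * t₀ - u), F (h (2 * t₀ - u))) u := fun u => by
    simpa using ((hh _).comp_const_sub (2 * t₀) u).prodMk ((hh' _).comp_const_sub (2 * t₀) u).neg
  have key := ODE_solution_unique_univ (v := fun _ p => (p.2, F p.1)) (t₀ := t₀) (fun _ => hv)
    (fun u => ⟨(hh u).prodMk (hh' u), hs u, trivial⟩) (fun u => ⟨hrefl u, hs _, trivial⟩)
    (by simp [ht₀, two_mul])
  exact (congrArg Prod.fst (congrFun key t)).symm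

theorem periodic_of_deriv_eq_zero_s10 {s : Set ℝ} {L : NNReal} (hF : LipschitzOnWith L F s)
    (hs : ∀ t, h t ∈ s) (hh : ∀ t, HasDerivAt h (h' t) t)
    (hh' : ∀ t, HasDerivAt h' (F (h t)) t) {t₁ t₂ : ℝ} (ht₁ : h' t₁ = 0) (ht₂ : h' t₂ = 0) :
    Function.Periodic h (2 * (t₂ - t₁)) := fun u =>
  calc h (u + 2 * (t₂ - t₁)) = h (2 * t₂ - (2 * t₁ - u)) := by congr 1; ring
    _ = h (2 * t₁ - u) := comp_reflect_eq_of_deriv_eq_zero hF hs hh hh' ht₂ _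
    _ = h u := comp_reflect_eq_of_deriv_eq_zero hF hs hh hh' ht₁ u

theorem setOf_deriv_eq_zero_subsingleton {s : Set ℝ} {L : NNReal} (hF : LipschitzOnWith L F s)
    (hs : ∀ t, h t ∈ s) (hh : ∀ t, HasDerivAt h (h' t) t)
    (hh' : ∀ t, HasDerivAt h' (F (h t)) t) (hper : ¬∃ T > 0, Function.Periodic h T) :
    {t | h' t = 0}.Subsingleton := fun t₁ ht₁ t₂ ht₂ => by
  by_contra hne
  rcases lt_or_gt_of_ne hne with hlt | hlt
  · exact hper ⟨_, by linarith, periodic_of_deriv_eq_zero_s10 hF hs hh hh' ht₁ ht₂⟩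
  · exact hper ⟨_, by linarith, periodic_of_deriv_eq_zero_s10 hF hs hh hh' ht₂ ht₁⟩

theorem abs_deriv_le_of_energy_eq {V : ℝ → ℝ} {K M R : ℝ} (hh : ∀ t, HasDerivAt h (h' t) t)
    (hE : ∀ t, h' t ^ 2 = 2 * (V (h t) + K)) (hV0 : ∀ t, 0 ≤ V (h t)) (hVM : ∀ t, V (h t) ≤ M)
    (hR : ∀ t, |h t| ≤ R) (t : ℝ) :
    |h' t| ≤ √(2 * (M + 2 * R ^ 2)) := by
  obtain ⟨ξ, -, hξ⟩ := exists_hasDerivAt_eq_slope h h' zero_lt_one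
    (fun t _ => (hh t).continuousAt.continuousWithinAt) fun t _ => hh t
  have hξR : |h' ξ| ≤ 2 * R := by
    rw [hξ, sub_zero, div_one]
    linarith [abs_sub (h 1) (h 0), hR 1, hR 0]
  have hK : K ≤ 2 * R ^ 2 := by
    nlinarith [hE ξ, hV0 ξ, sq_abs (h' ξ), abs_nonneg (h' ξ)]
  exact Real.abs_le_sqrt (by linarith [hE t, hVM t])

end SecondOrderODE

theorem IsPreconnected.forall_nonneg_or_forall_nonpos {X : Type*} [TopologicalSpace X]
    {s : Set X} {f : X → ℝ} (hs : IsPreconnected s) (hf : ContinuousOn f s)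
    (hz : ∀ x ∈ s, f x ≠ 0) : (∀ x ∈ s, 0 ≤ f x) ∨ (∀ x ∈ s, f x ≤ 0) := by
  by_contra! ⟨⟨u, hu, hu0⟩, ⟨v, hv, hv0⟩⟩
  obtain ⟨w, hw, hw0⟩ := hs.intermediate_value hu hv hf ⟨hu0.le, hv0.le⟩
  exact hz w hw hw0

theorem lintegral_ofReal_le_of_forall_intervalIntegral_le {g : ℝ → ℝ} {C : ℝ}
    (hg : LocallyIntegrable g) (hg0 : ∀ t, 0 ≤ g t) (hC : ∀ a b, a ≤ b → ∫ t in a..b, g t ≤ C) :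
    ∫⁻ t, ENNReal.ofReal (g t) ≤ ENNReal.ofReal C := by
  have hcover : AECover volume atTop fun n : ℕ => Ioc (-(n : ℝ)) n :=
    aecover_Ioc (tendsto_neg_atTop_atBot.comp tendsto_natCast_atTop_atTop)
      tendsto_natCast_atTop_atTop
  rw [← hcover.iSup_lintegral_eq_of_countably_generated
    hg.aestronglyMeasurable.aemeasurable.ennreal_ofReal]
  refine iSup_le fun n => ?_
  have hn : -(n : ℝ) ≤ n := by linarith [n.cast_nonneg (α := ℝ)]
  rw [← ofReal_integral_eq_lintegral_ofReal
    ((hg.integrableOn_isCompact isCompact_Icc).mono_set Ioc_subset_Icc_self)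
    (ae_of_all _ fun t => hg0 t), ← intervalIntegral.integral_of_le hn]
  exact ENNReal.ofReal_le_ofReal (hC _ _ hn)

theorem nonneg_apply_of_eq_sInf_or_sSup_range {ι : Type*} [Nonempty ι] {g : ℝ → ℝ} {h : ι → ℝ}
    {σ : ℝ} (hg : Continuous g) (hgh : ∀ i, 0 ≤ g (h i)) (hbdd : BddBelow (range h))
    (hbdd' : BddAbove (range h)) (hσ : σ = sInf (range h) ∨ σ = sSup (range h)) : 0 ≤ g σ := by
  have hσ_mem : σ ∈ closure (range h) := by
    rcases hσ with rfl | rfl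
    exacts [csInf_mem_closure (range_nonempty h) hbdd, csSup_mem_closure (range_nonempty h) hbdd']
  exact closure_minimal (t := {x | 0 ≤ g x}) (range_subset_iff.mpr hgh)
    (isClosed_le continuous_const hg) hσ_mem

section IntervalBound

variable {f f' : ℝ → ℝ} {a b B : ℝ}

theorem integral_sq_deriv_le_of_nonneg (hf : ∀ t, HasDerivAt f (f' t) t) (hf' : Continuous f')
    (hB : ∀ t, |f' t| ≤ B) (hab : a ≤ b) (hpos : ∀ t ∈ Ioo a b, 0 ≤ f' t) :
    ∫ t in a..b, f' t ^ 2 ≤ B * (f b - f a) :=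
  calc ∫ t in a..b, f' t ^ 2 ≤ ∫ t in a..b, B * f' t := by
        refine intervalIntegral.integral_mono_on_of_le_Ioo hab ((hf'.pow 2).intervalIntegrable _ _)
          ((hf'.const_mul B).intervalIntegrable _ _) fun t ht => ?_
        have := hB t
        rw [abs_of_nonneg (hpos t ht)] at this
        nlinarith [hpos t ht]
    _ = B * (f b - f a) := by
        rw [intervalIntegral.integral_const_mul,
          intervalIntegral.integral_eq_sub_of_hasDerivAt (fun t _ => hf t)
            (hf'.intervalIntegrable _ _)]

theorem integral_sq_deriv_le_of_ne_zero (hf : ∀ t, HasDerivAt f (f' t) t) (hf' : Continuous f')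
    (hB : ∀ t, |f' t| ≤ B) (hab : a ≤ b) (hz : ∀ t ∈ Ioo a b, f' t ≠ 0) :
    ∫ t in a..b, f' t ^ 2 ≤ B * |f b - f a| := by
  have hB0 : 0 ≤ B := (abs_nonneg _).trans (hB a)
  rcases isPreconnected_Ioo.forall_nonneg_or_forall_nonpos hf'.continuousOn hz with hpos | hneg
  · exact (integral_sq_deriv_le_of_nonneg hf hf' hB hab hpos).trans
      (mul_le_mul_of_nonneg_left (le_abs_self _) hB0)
  · have := integral_sq_deriv_le_of_nonneg (fun t => (hf t).neg) hf'.neg (by simpa using hB) hab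
      (fun t ht => neg_nonneg.mpr (hneg t ht))
    simp only [neg_sq, Pi.neg_apply, neg_sub_neg] at this
    exact this.trans (mul_le_mul_of_nonneg_left (abs_sub_comm (f b) (f a) ▸ le_abs_self _) hB0)

theorem integral_sq_deriv_le_of_subsingleton {D : ℝ} (hf : ∀ t, HasDerivAt f (f' t) t)
    (hf' : Continuous f') (hB : ∀ t, |f' t| ≤ B) (hD : ∀ s t, |f s - f t| ≤ D)
    (hz : {t | f' t = 0}.Subsingleton) (hab : a ≤ b) :
    ∫ t in a..b, f' t ^ 2 ≤ 2 * B * D := by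
  have hB0 : 0 ≤ B := (abs_nonneg _).trans (hB 0)
  have hD0 : 0 ≤ D := (abs_nonneg _).trans (hD 0 0)
  by_cases hzab : ∃ z ∈ Ioo a b, f' z = 0
  · obtain ⟨z, hz_mem, hz0⟩ := hzab
    have hne : ∀ t, t ≠ z → f' t ≠ 0 := fun t htz ht0 => htz (hz ht0 hz0)
    have hsq : Continuous fun t => f' t ^ 2 := hf'.pow 2
    rw [← intervalIntegral.integral_add_adjacent_intervals (hsq.intervalIntegrable a z)
      (hsq.intervalIntegrable z b)]
    have h₁ := integral_sq_deriv_le_of_ne_zero hf hf' hB hz_mem.1.le fun t ht => hne t ht.2.ne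
    have h₂ := integral_sq_deriv_le_of_ne_zero hf hf' hB hz_mem.2.le fun t ht => hne t ht.1.ne'
    linarith [mul_le_mul_of_nonneg_left (hD z a) hB0, mul_le_mul_of_nonneg_left (hD b z) hB0]
  · push Not at hzab
    have := integral_sq_deriv_le_of_ne_zero hf hf' hB hab hzab
    linarith [mul_le_mul_of_nonneg_left (hD b a) hB0, mul_nonneg hB0 hD0]

theorem lintegral_sq_deriv_le_of_subsingleton {D : ℝ} (hf : ∀ t, HasDerivAt f (f' t) t)
    (hf' : Continuous f') (hB : ∀ t, |f' t| ≤ B) (hD : ∀ s t, |f s - f t| ≤ D)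
    (hz : {t | f' t = 0}.Subsingleton) :
    ∫⁻ t, ENNReal.ofReal (f' t ^ 2) ≤ ENNReal.ofReal (2 * B * D) :=
  lintegral_ofReal_le_of_forall_intervalIntegral_le (hf'.pow 2).locallyIntegrable
    (fun _ => sq_nonneg _) fun _ _ => integral_sq_deriv_le_of_subsingleton hf hf' hB hD hz

end IntervalBound

/-- There is a constant `C > 0` depending only on `W` such that: if
`h ∈ C²(ℝ)` solves `h'' = W'(h)` with `|h| ≤ 1`, and `h` is NOT both periodic and
non-constant, then for `σ ∈ {inf_ℝ h, sup_ℝ h}` one has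
`∫_{−∞}^{+∞} (|h'|²/2 + W(h) − W(σ)) ≤ C`. -/
theorem energy_integral_bound (W : ℝ → ℝ) (hW : DoubleWell W) :
    ∃ C > (0 : ℝ), ∀ h : ℝ → ℝ, ContDiff ℝ 2 h → (∀ t : ℝ, |h t| ≤ 1) →
      (∀ t : ℝ, deriv (deriv h) t = deriv W (h t)) →
      ¬ ((∃ T > (0 : ℝ), ∀ t : ℝ, h (t + T) = h t) ∧ ¬ (∃ c : ℝ, ∀ t : ℝ, h t = c)) →
      ∀ σ : ℝ, (σ = sInf (Set.range h) ∨ σ = sSup (Set.range h)) →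
      ∫⁻ t : ℝ, ENNReal.ofReal ((deriv h t) ^ 2 / 2 + W (h t) - W σ) ≤ ENNReal.ofReal C := by
  obtain ⟨hW2, -, -, -, hW0, -⟩ := hW
  obtain ⟨M, hM⟩ : ∃ M, ∀ x ∈ Icc (-1 : ℝ) 1, W x ≤ M :=
    (isCompact_Icc.bddAbove_image hW2.continuous.continuousOn).imp fun _ hM _ hx =>
      hM (mem_image_of_mem W hx)
  obtain ⟨L, hL⟩ : ∃ L, LipschitzOnWith L (deriv W) (Icc (-1 : ℝ) 1) :=
    (hW2.deriv' (n := 1)).locallyLipschitz.locallyLipschitzOn.exists_lipschitzOnWith_of_compact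
      isCompact_Icc
  have hM0 : 0 ≤ M := (hW0 0).trans (hM 0 (by norm_num))
  refine ⟨4 * √(2 * M + 4), by positivity, fun h hh hb hode hnp σ hσ => ?_⟩
  have hmem : ∀ t, h t ∈ Icc (-1 : ℝ) 1 := fun t => abs_le.mp (hb t)
  have hh1 : ∀ t, HasDerivAt h (deriv h t) t := fun t =>
    (hh.differentiable (by norm_num) t).hasDerivAt
  have hh2 : ∀ t, HasDerivAt (deriv h) (deriv W (h t)) t := fun t =>
    hode t ▸ ((hh.deriv' (n := 1)).differentiable (by norm_num) t).hasDerivAt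
  by_cases hconst : ∃ c, ∀ t, h t = c
  · obtain ⟨c, hc⟩ := hconst
    obtain rfl : h = fun _ => c := funext hc
    obtain rfl : σ = c := by simpa [range_const] using hσ
    simp
  obtain ⟨K, hE⟩ := exists_sq_deriv_eq_of_hasDerivAt
    (fun x => (hW2.differentiable (by norm_num) x).hasDerivAt) hh1 hh2
  have hσK : 0 ≤ W σ + K :=
    nonneg_apply_of_eq_sInf_or_sSup_range (g := fun x => W x + K)
      (hW2.continuous.add continuous_const)
      (fun t => by nlinarith [hE t, sq_nonneg (deriv h t)])
      ⟨-1, forall_mem_range.mpr fun t => (hmem t).1⟩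
      ⟨1, forall_mem_range.mpr fun t => (hmem t).2⟩ hσ
  calc ∫⁻ t, ENNReal.ofReal (deriv h t ^ 2 / 2 + W (h t) - W σ)
      ≤ ∫⁻ t, ENNReal.ofReal (deriv h t ^ 2) :=
        lintegral_mono fun t => ENNReal.ofReal_le_ofReal (by linarith [hE t, hσK])
    _ ≤ ENNReal.ofReal (2 * √(2 * (M + 2 * 1 ^ 2)) * 2) :=
        lintegral_sq_deriv_le_of_subsingleton hh1 (hh.continuous_deriv (by norm_num))
          (abs_deriv_le_of_energy_eq hh1 hE (fun _ => hW0 _) (fun t => hM _ (hmem t)) hb)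
          (fun s t => by linarith [abs_sub (h s) (h t), hb s, hb t])
          (setOf_deriv_eq_zero_subsingleton hL hmem hh1 hh2 fun hper => hnp ⟨hper, hconst⟩)
    _ = ENNReal.ofReal (4 * √(2 * M + 4)) := by ring_nf
end

section
/- Let u ∈ C²(ℝ², [−1,1]) with |∇_G u| ∈ L^∞(ℝ²) solve Δ_G u = W'(u) in all of ℝ², and assume ∂_y u(ζ) > 0 for every ζ ∈ ℝ². For t ∈ ℝ let u^t(x,y) := u(x, y+t) and E_R(t) := ∫_{B_R(0)} ( |∇_G u^t|²/2 + W(u^t) ) dx dy. Then there exists a constant C > 0, depending only on W and on ‖∇_G u‖_{L^∞(ℝ²)}, such that E_R(0) ≤ E_R(t) + C R² for every t ∈ ℝ and every R > 0. -/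
open MeasureTheory

/-- Partial derivative in `x`. -/
noncomputable def pX (u : ℝ × ℝ → ℝ) (p : ℝ × ℝ) : ℝ := deriv (fun x => u (x, p.2)) p.1

/-- Partial derivative in `y`. -/
noncomputable def pY (u : ℝ × ℝ → ℝ) (p : ℝ × ℝ) : ℝ := deriv (fun y => u (p.1, y)) p.2

/-- Second partial derivative in `x`. -/
noncomputable def pXX (u : ℝ × ℝ → ℝ) (p : ℝ × ℝ) : ℝ :=
  deriv (deriv (fun x => u (x, p.2))) p.1

/-- Second partial derivative in `y`. -/
noncomputable def pYY (u : ℝ × ℝ → ℝ) (p : ℝ × ℝ) : ℝ :=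
  deriv (deriv (fun y => u (p.1, y))) p.2

/-- The Grushin Laplacian `Δ_G u = ∂_xx u + x² ∂_yy u`. -/
noncomputable def grushinLap (u : ℝ × ℝ → ℝ) (p : ℝ × ℝ) : ℝ := pXX u p + p.1 ^ 2 * pYY u p

/-- The squared length of the Grushin gradient: `|∇_G u|² = (∂_x u)² + x² (∂_y u)²`. -/
noncomputable def grushinGradSq (u : ℝ × ℝ → ℝ) (p : ℝ × ℝ) : ℝ :=
  (pX u p) ^ 2 + p.1 ^ 2 * (pY u p) ^ 2

/-- The Grushin norm `‖(x,y)‖ = (x⁴ + 4y²)^(1/4)`. -/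
noncomputable def gNorm (p : ℝ × ℝ) : ℝ := (p.1 ^ 4 + 4 * p.2 ^ 2) ^ ((1 : ℝ) / 4)

/-- The Grushin ball of radius `R` centered at `c`. -/
def gBall (c : ℝ × ℝ) (R : ℝ) : Set (ℝ × ℝ) := {p | gNorm (p - c) < R}

/-!
Along a solution of `Δ_G u = W'(u)` the current
`J = (∂ₓu ∂ᵧu, x² (∂ᵧu)² / 2 - (∂ₓu)² / 2 - W(u))` is divergence free, and the energy density
equals `x² (∂ᵧu)² - J_y`. Cut `B_R(0)` into horizontal segments `|x| < l`. The divergence theorem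
on `[-l, l] × [y, y + t]` turns the change of `∫ J_y dx` under the translation into the fluxes of
`J_x` through the two vertical sides; since `|J_x| ≤ K ∂ᵧu` and `u` takes values in `[-1, 1]`,
each segment contributes at most `4K`, and the heights `y` of the segments range over an interval
of length `R²`. The remaining term `∫ x² (∂ᵧu)²` is at most `K R ∫ ∂ᵧu` over the box
`[-R, R] × [-R²/2, R²/2] ⊇ B_R(0)`, that is at most `4 K R²`, and the translated term
`∫ x² (∂ᵧu^t)²` is nonnegative.
-/

open Set

section LineDerivatives

variable {E : Type*} [NormedAddCommGroup E] [NormedSpace ℝ E] {F : ℝ × ℝ → E}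
  {F' : ℝ × ℝ →L[ℝ] E} {a b : ℝ}

theorem HasFDerivAt.hasDerivAt_horizontal (hF : HasFDerivAt F F' (a, b)) :
    HasDerivAt (fun x => F (x, b)) (F' (1, 0)) a :=
  hF.comp_hasDerivAt a ((hasDerivAt_id a).prodMk (hasDerivAt_const a b))

theorem HasFDerivAt.hasDerivAt_vertical (hF : HasFDerivAt F F' (a, b)) :
    HasDerivAt (fun y => F (a, y)) (F' (0, 1)) b :=
  hF.comp_hasDerivAt b ((hasDerivAt_const b a).prodMk (hasDerivAt_id b))

end LineDerivatives

section Partials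

variable {u : ℝ × ℝ → ℝ} {a b : ℝ}

theorem DifferentiableAt.hasDerivAt_pX (hu : DifferentiableAt ℝ u (a, b)) :
    HasDerivAt (fun x => u (x, b)) (pX u (a, b)) a :=
  hu.hasFDerivAt.hasDerivAt_horizontal.differentiableAt.hasDerivAt

theorem DifferentiableAt.hasDerivAt_pY (hu : DifferentiableAt ℝ u (a, b)) :
    HasDerivAt (fun y => u (a, y)) (pY u (a, b)) b :=
  hu.hasFDerivAt.hasDerivAt_vertical.differentiableAt.hasDerivAt

theorem pX_eq_fderiv (hu : Differentiable ℝ u) : pX u = fun p => fderiv ℝ u p (1, 0) :=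
  funext fun _ => (hu _).hasFDerivAt.hasDerivAt_horizontal.deriv

theorem pY_eq_fderiv (hu : Differentiable ℝ u) : pY u = fun p => fderiv ℝ u p (0, 1) :=
  funext fun _ => (hu _).hasFDerivAt.hasDerivAt_vertical.deriv

theorem continuous_pY (hu : ContDiff ℝ 1 u) : Continuous (pY u) := by
  rw [pY_eq_fderiv (hu.differentiable one_ne_zero)]
  exact (hu.continuous_fderiv one_ne_zero).clm_apply continuous_const

theorem differentiable_fderiv_of_contDiff_two (hu : ContDiff ℝ 2 u) :
    Differentiable ℝ (fderiv ℝ u) :=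
  (hu.fderiv_right (m := 1) (by norm_num)).differentiable one_ne_zero

theorem differentiable_pX (hu : ContDiff ℝ 2 u) : Differentiable ℝ (pX u) := by
  rw [pX_eq_fderiv (hu.differentiable (by norm_num))]
  exact (differentiable_fderiv_of_contDiff_two hu).clm_apply (differentiable_const _)

theorem differentiable_pY (hu : ContDiff ℝ 2 u) : Differentiable ℝ (pY u) := by
  rw [pY_eq_fderiv (hu.differentiable (by norm_num))]
  exact (differentiable_fderiv_of_contDiff_two hu).clm_apply (differentiable_const _)

theorem pY_pX (hu : ContDiff ℝ 2 u) (p : ℝ × ℝ) : pY (pX u) p = pX (pY u) p := by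
  obtain ⟨a, b⟩ := p
  have hD2 := (differentiable_fderiv_of_contDiff_two hu (a, b)).hasFDerivAt
  have hy := hD2.hasDerivAt_vertical.clm_apply (hasDerivAt_const b ((1 : ℝ), (0 : ℝ)))
  have hx := hD2.hasDerivAt_horizontal.clm_apply (hasDerivAt_const a ((0 : ℝ), (1 : ℝ)))
  simp only [map_zero, add_zero] at hx hy
  rw [pX_eq_fderiv (hu.differentiable (by norm_num)),
    pY_eq_fderiv (hu.differentiable (by norm_num)), pY, pX, hx.deriv, hy.deriv]
  exact (hu.contDiffAt.isSymmSndFDerivAt (by simp)) _ _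

end Partials

/-- `(currentX u, currentY W u)` is the Noether current of the invariance of `Δ_G u = W'(u)`
under vertical translations. -/
noncomputable def currentX (u : ℝ × ℝ → ℝ) (p : ℝ × ℝ) : ℝ := pX u p * pY u p

noncomputable def currentY (W : ℝ → ℝ) (u : ℝ × ℝ → ℝ) (p : ℝ × ℝ) : ℝ :=
  p.1 ^ 2 * pY u p ^ 2 / 2 - pX u p ^ 2 / 2 - W (u p)

section Current

variable {W : ℝ → ℝ} {u : ℝ × ℝ → ℝ}

theorem differentiable_currentX (hu : ContDiff ℝ 2 u) : Differentiable ℝ (currentX u) :=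
  (differentiable_pX hu).mul (differentiable_pY hu)

theorem differentiable_currentY (hu : ContDiff ℝ 2 u) (hW : Differentiable ℝ W) :
    Differentiable ℝ (currentY W u) := by
  have := differentiable_pX hu
  have := differentiable_pY hu
  have := hu.differentiable (by norm_num)
  unfold currentY
  fun_prop

theorem pX_currentX_add_pY_currentY (hu : ContDiff ℝ 2 u) (hW : Differentiable ℝ W)
    (hpde : ∀ p, grushinLap u p = deriv W (u p)) (p : ℝ × ℝ) :
    pX (currentX u) p + pY (currentY W u) p = 0 := by
  obtain ⟨a, b⟩ := p
  have hPx := (differentiable_pX hu (a, b)).hasDerivAt_pX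
  have hQx := (differentiable_pY hu (a, b)).hasDerivAt_pX
  have hPy := (differentiable_pX hu (a, b)).hasDerivAt_pY
  have hQy := (differentiable_pY hu (a, b)).hasDerivAt_pY
  have huy := (hu.differentiable (by norm_num) (a, b)).hasDerivAt_pY
  have hX : pX (currentX u) (a, b) =
      pX (pX u) (a, b) * pY u (a, b) + pX u (a, b) * pX (pY u) (a, b) :=
    (hPx.mul hQx).deriv
  have hY : pY (currentY W u) (a, b) = a ^ 2 * pY u (a, b) * pY (pY u) (a, b)
      - pX u (a, b) * pY (pX u) (a, b) - deriv W (u (a, b)) * pY u (a, b) :=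
    ((((hQy.pow 2).const_mul (a ^ 2)).div_const 2).sub ((hPy.pow 2).div_const 2)).sub
      ((hW _).hasDerivAt.comp b huy) |>.deriv.trans (by ring)
  have hlap : pX (pX u) (a, b) + a ^ 2 * pY (pY u) (a, b) = deriv W (u (a, b)) := hpde (a, b)
  rw [hX, hY, pY_pX hu]
  linear_combination pY u (a, b) * hlap

end Current

theorem integral_sub_integral_eq_of_divergence_free {F G : ℝ × ℝ → ℝ} (hF : Differentiable ℝ F)
    (hG : Differentiable ℝ G) (hdiv : ∀ p, pX F p + pY G p = 0) (a₁ a₂ b₁ b₂ : ℝ) :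
    (∫ x in a₁..b₁, G (x, b₂)) - ∫ x in a₁..b₁, G (x, a₂) =
      (∫ y in a₂..b₂, F (a₁, y)) - ∫ y in a₂..b₂, F (b₁, y) := by
  have hdiv' : ∀ p, fderiv ℝ F p (1, 0) + fderiv ℝ G p (0, 1) = 0 := fun p => by
    simpa only [pX_eq_fderiv hF, pY_eq_fderiv hG] using hdiv p
  have h := integral2_divergence_prod_of_hasFDerivAt F G (fderiv ℝ F) (fderiv ℝ G) a₁ a₂ b₁ b₂
    hF.continuous.continuousOn hG.continuous.continuousOn (fun p _ => (hF p).hasFDerivAt)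
    (fun p _ => (hG p).hasFDerivAt) (by simp only [hdiv']; exact integrableOn_zero)
  simp only [hdiv', intervalIntegral.integral_zero] at h
  linarith

section Flux

variable {W : ℝ → ℝ} {u : ℝ × ℝ → ℝ} {K : ℝ}

theorem abs_integral_currentX_le (hu : ContDiff ℝ 1 u) (hPK : ∀ p, |pX u p| ≤ K)
    (hQ : ∀ p, 0 ≤ pY u p) (c a b : ℝ) :
    |∫ y in a..b, currentX u (c, y)| ≤ K * |u (c, b) - u (c, a)| := by
  have hK : 0 ≤ K := (abs_nonneg _).trans (hPK 0)
  have hQc : Continuous fun y => pY u (c, y) := (continuous_pY hu).comp (.prodMk_right c)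
  have hbound : ∀ y, ‖currentX u (c, y)‖ ≤ K * pY u (c, y) := fun y => by
    rw [currentX, Real.norm_eq_abs, abs_mul, abs_of_nonneg (hQ _)]
    exact mul_le_mul_of_nonneg_right (hPK _) (hQ _)
  calc |∫ y in a..b, currentX u (c, y)| = ‖∫ y in a..b, currentX u (c, y)‖ := rfl
    _ ≤ |∫ y in a..b, K * pY u (c, y)| := intervalIntegral.norm_integral_le_abs_of_norm_le
        (.of_forall hbound) ((continuous_const.mul hQc).intervalIntegrable _ _)
    _ = K * |u (c, b) - u (c, a)| := by
        rw [intervalIntegral.integral_const_mul, intervalIntegral.integral_eq_sub_of_hasDerivAt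
          (fun y _ => (hu.differentiable one_ne_zero _).hasDerivAt_pY) (hQc.intervalIntegrable _ _),
          abs_mul, abs_of_nonneg hK]

theorem integral_currentY_shift_sub_le (hu : ContDiff ℝ 2 u) (hW : Differentiable ℝ W)
    (hpde : ∀ p, grushinLap u p = deriv W (u p)) (hrange : ∀ p, u p ∈ Icc (-1 : ℝ) 1)
    (hPK : ∀ p, |pX u p| ≤ K) (hQ : ∀ p, 0 ≤ pY u p) (t y l : ℝ) :
    ∫ x in -l..l, (currentY W u (x, y + t) - currentY W u (x, y)) ≤ 4 * K := by
  have hJ := (differentiable_currentY hu hW).continuous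
  have hincr : ∀ c, |u (c, y + t) - u (c, y)| ≤ 2 := fun c => by
    have h₁ := hrange (c, y + t); have h₂ := hrange (c, y)
    rw [abs_le]; constructor <;> linarith [h₁.1, h₁.2, h₂.1, h₂.2]
  have hJint : ∀ s, IntervalIntegrable (fun x => currentY W u (x, s)) volume (-l) l :=
    fun s => (hJ.comp (.prodMk_left s)).intervalIntegrable _ _
  rw [intervalIntegral.integral_sub (hJint _) (hJint _), integral_sub_integral_eq_of_divergence_free
    (differentiable_currentX hu) (differentiable_currentY hu hW)
    (pX_currentX_add_pY_currentY hu hW hpde)]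
  have hflux := abs_integral_currentX_le (hu.of_le (by norm_num)) hPK hQ
  have hK : 0 ≤ K := (abs_nonneg _).trans (hPK 0)
  have h₁ := (le_abs_self _).trans ((hflux (-l) y (y + t)).trans
    (mul_le_mul_of_nonneg_left (hincr (-l)) hK))
  have h₂ := (neg_abs_le _).trans' (neg_le_neg ((hflux l y (y + t)).trans
    (mul_le_mul_of_nonneg_left (hincr l) hK)))
  linarith

end Flux

theorem setIntegral_le_mul_of_slice_le {S : Set (ℝ × ℝ)} (hS : MeasurableSet S) {B : Set ℝ}
    (hB : MeasurableSet B) (hB_fin : volume B ≠ ⊤) (hSB : ∀ p ∈ S, p.2 ∈ B) {f : ℝ × ℝ → ℝ}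
    (hf : IntegrableOn f S) {c : ℝ} (hslice : ∀ y ∈ B, ∫ x in {x | (x, y) ∈ S}, f (x, y) ≤ c) :
    ∫ p in S, f p ≤ c * volume.real B := by
  have hind : Integrable (S.indicator f) (volume.prod volume) := (integrable_indicator_iff hS).2 hf
  have hslice_le : ∀ y, ∫ x, S.indicator f (x, y) ≤ B.indicator (fun _ => c) y := fun y => by
    by_cases hy : y ∈ B
    · rw [indicator_of_mem hy]
      convert hslice y hy using 1
      exact integral_indicator (f := fun x => f (x, y)) (μ := volume)
        (measurable_prodMk_right (y := y) hS)
    · have hzero : ∀ x, S.indicator f (x, y) = 0 := fun x =>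
        indicator_of_notMem (fun hp => hy (hSB _ hp)) _
      simp [hzero, indicator_of_notMem hy]
  calc ∫ p in S, f p = ∫ y, ∫ x, S.indicator f (x, y) := by
        rw [← integral_indicator hS, Measure.volume_eq_prod, integral_prod_symm _ hind]
    _ ≤ ∫ y, B.indicator (fun _ => c) y := integral_mono hind.integral_prod_right
        ((integrable_indicator_iff hB).2 (integrableOn_const hB_fin)) hslice_le
    _ = c * volume.real B := by rw [integral_indicator_const _ hB, smul_eq_mul, mul_comm]

section GrushinBall

variable {R : ℝ}

theorem mem_gBall_zero (hR : 0 < R) {p : ℝ × ℝ} :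
    p ∈ gBall 0 R ↔ p.1 ^ 4 + 4 * p.2 ^ 2 < R ^ 4 := by
  rw [gBall, mem_ofPred_eq, sub_zero, gNorm, one_div,
    Real.rpow_inv_lt_iff_of_pos (by positivity) hR.le (by norm_num)]
  norm_cast

theorem isOpen_gBall (c : ℝ × ℝ) (R : ℝ) : IsOpen (gBall c R) :=
  isOpen_lt ((by fun_prop : Continuous fun p : ℝ × ℝ => (p - c).1 ^ 4 + 4 * (p - c).2 ^ 2)
    |>.rpow_const fun _ => Or.inr (by norm_num)) continuous_const

theorem abs_lt_of_mem_gBall_zero (hR : 0 < R) {p : ℝ × ℝ} (hp : p ∈ gBall 0 R) :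
    |p.1| < R ∧ |p.2| < R ^ 2 / 2 := by
  rw [mem_gBall_zero hR] at hp
  constructor
  · refine lt_of_pow_lt_pow_left₀ 4 hR.le ?_
    rw [Even.pow_abs (by decide)]
    nlinarith [sq_nonneg p.2]
  · refine lt_of_pow_lt_pow_left₀ 2 (by positivity) ?_
    rw [sq_abs]
    nlinarith [sq_nonneg (p.1 ^ 2)]

theorem gBall_zero_subset (hR : 0 < R) :
    gBall 0 R ⊆ Icc (-R) R ×ˢ Icc (-(R ^ 2 / 2)) (R ^ 2 / 2) := fun _ hp =>
  have h := abs_lt_of_mem_gBall_zero hR hp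
  ⟨abs_le.1 h.1.le, abs_le.1 h.2.le⟩

theorem Continuous.integrableOn_gBall_zero {f : ℝ × ℝ → ℝ} (hf : Continuous f) (hR : 0 < R) :
    IntegrableOn f (gBall 0 R) :=
  (hf.continuousOn.integrableOn_compact (isCompact_Icc.prod isCompact_Icc)).mono_set
    (gBall_zero_subset hR)

theorem exists_slice_gBall_zero_eq_Ioo (hR : 0 < R) {y : ℝ} (hy : |y| < R ^ 2 / 2) :
    ∃ l, 0 ≤ l ∧ {x | (x, y) ∈ gBall 0 R} = Ioo (-l) l := by
  have hc : 0 < R ^ 4 - 4 * y ^ 2 := by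
    have := pow_lt_pow_left₀ hy (abs_nonneg y) two_ne_zero
    rw [sq_abs] at this
    nlinarith
  refine ⟨(R ^ 4 - 4 * y ^ 2) ^ (4 : ℝ)⁻¹, by positivity, Set.ext fun x => ?_⟩
  rw [mem_ofPred_eq, mem_gBall_zero hR, mem_Ioo, ← abs_lt,
    Real.lt_rpow_inv_iff_of_pos (abs_nonneg x) hc.le (by norm_num)]
  norm_cast
  rw [Even.pow_abs (by decide)]
  constructor <;> intro h <;> linarith

theorem setIntegral_gBall_zero_le (hR : 0 < R) {f : ℝ × ℝ → ℝ} (hf : Continuous f) {c : ℝ}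
    (hslice : ∀ y l, ∫ x in -l..l, f (x, y) ≤ c) : ∫ p in gBall 0 R, f p ≤ c * R ^ 2 := by
  have hvol : volume.real (Ioo (-(R ^ 2 / 2)) (R ^ 2 / 2)) = R ^ 2 := by
    rw [Real.volume_real_Ioo, sub_neg_eq_add, add_halves, max_eq_left (by positivity)]
  rw [← hvol]
  refine setIntegral_le_mul_of_slice_le (isOpen_gBall 0 R).measurableSet measurableSet_Ioo
    measure_Ioo_lt_top.ne (fun p hp => abs_lt.1 (abs_lt_of_mem_gBall_zero hR hp).2)
    (hf.integrableOn_gBall_zero hR) fun y hy => ?_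
  obtain ⟨l, hl, hslice_eq⟩ := exists_slice_gBall_zero_eq_Ioo hR (abs_lt.2 hy)
  rw [hslice_eq, ← integral_Ioc_eq_integral_Ioo, ← intervalIntegral.integral_of_le (by linarith)]
  exact hslice y l

end GrushinBall

section Box

variable {u : ℝ × ℝ → ℝ} {K R : ℝ}

theorem setIntegral_pY_prod_Icc_le (hu : ContDiff ℝ 1 u) (hrange : ∀ p, u p ∈ Icc (-1 : ℝ) 1)
    {a b c d : ℝ} (hab : a ≤ b) (hcd : c ≤ d) :
    ∫ p in Icc a b ×ˢ Icc c d, pY u p ≤ 2 * (b - a) := by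
  have hQ := continuous_pY hu
  have hcol : ∀ x, ∫ y in Icc c d, pY u (x, y) = u (x, d) - u (x, c) := fun x => by
    rw [integral_Icc_eq_integral_Ioc, ← intervalIntegral.integral_of_le hcd,
      intervalIntegral.integral_eq_sub_of_hasDerivAt
        (fun y _ => (hu.differentiable one_ne_zero _).hasDerivAt_pY)
        ((hQ.comp (.prodMk_right x)).intervalIntegrable _ _)]
  rw [Measure.volume_eq_prod, setIntegral_prod _
    (hQ.continuousOn.integrableOn_compact (isCompact_Icc.prod isCompact_Icc))]
  simp only [hcol]
  calc ∫ x in Icc a b, (u (x, d) - u (x, c)) ≤ ∫ _ in Icc a b, (2 : ℝ) := by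
        refine setIntegral_mono_on ?_ (integrableOn_const measure_Icc_lt_top.ne) measurableSet_Icc
          fun x _ => ?_
        · exact (by fun_prop : Continuous fun x => u (x, d) - u (x, c)).integrableOn_Icc
        · have h₁ := hrange (x, d); have h₂ := hrange (x, c)
          linarith [h₁.2, h₂.1]
    _ = 2 * (b - a) := by
        rw [setIntegral_const, Real.volume_real_Icc, max_eq_left (by linarith), smul_eq_mul,
          mul_comm]

theorem setIntegral_gBall_zero_sq_mul_pY_sq_le (hu : ContDiff ℝ 1 u)
    (hrange : ∀ p, u p ∈ Icc (-1 : ℝ) 1) (hxQK : ∀ p : ℝ × ℝ, |p.1 * pY u p| ≤ K)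
    (hQ : ∀ p, 0 ≤ pY u p) (hR : 0 < R) :
    ∫ p in gBall 0 R, p.1 ^ 2 * pY u p ^ 2 ≤ 4 * K * R ^ 2 := by
  have hK : 0 ≤ K := (abs_nonneg _).trans (hxQK 0)
  have hcQ := continuous_pY hu
  have hbox : IsCompact (Icc (-R) R ×ˢ Icc (-(R ^ 2 / 2)) (R ^ 2 / 2)) :=
    isCompact_Icc.prod isCompact_Icc
  have hint : ∀ f : ℝ × ℝ → ℝ, Continuous f →
      IntegrableOn f (Icc (-R) R ×ˢ Icc (-(R ^ 2 / 2)) (R ^ 2 / 2)) := fun f hf =>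
    hf.continuousOn.integrableOn_compact hbox
  have hpointwise : ∀ p ∈ Icc (-R) R ×ˢ Icc (-(R ^ 2 / 2)) (R ^ 2 / 2),
      p.1 ^ 2 * pY u p ^ 2 ≤ K * R * pY u p := fun p hp => by
    have hx : |p.1| ≤ R := abs_le.2 hp.1
    calc p.1 ^ 2 * pY u p ^ 2 = |p.1 * pY u p| * (|p.1| * pY u p) := by
          rw [abs_mul, abs_of_nonneg (hQ p), ← sq_abs p.1]; ring
      _ ≤ K * (R * pY u p) := mul_le_mul (hxQK p) (mul_le_mul_of_nonneg_right hx (hQ p))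
          (mul_nonneg (abs_nonneg _) (hQ p)) hK
      _ = K * R * pY u p := by ring
  calc ∫ p in gBall 0 R, p.1 ^ 2 * pY u p ^ 2
      ≤ ∫ p in Icc (-R) R ×ˢ Icc (-(R ^ 2 / 2)) (R ^ 2 / 2), p.1 ^ 2 * pY u p ^ 2 :=
        setIntegral_mono_set (hint _ (by fun_prop)) (.of_forall fun _ => by positivity)
          (gBall_zero_subset hR).eventuallyLE
    _ ≤ ∫ p in Icc (-R) R ×ˢ Icc (-(R ^ 2 / 2)) (R ^ 2 / 2), K * R * pY u p :=
        setIntegral_mono_on (hint _ (by fun_prop)) (hint _ (by fun_prop))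
          (measurableSet_Icc.prod measurableSet_Icc) hpointwise
    _ = K * R * ∫ p in Icc (-R) R ×ˢ Icc (-(R ^ 2 / 2)) (R ^ 2 / 2), pY u p :=
        integral_const_mul _ _
    _ ≤ K * R * (2 * (R - -R)) := mul_le_mul_of_nonneg_left
        (setIntegral_pY_prod_Icc_le hu hrange (by linarith) (by nlinarith)) (by positivity)
    _ = 4 * K * R ^ 2 := by ring

end Box

theorem grushinGradSq_div_two_add_eq (W : ℝ → ℝ) (u : ℝ × ℝ → ℝ) (p : ℝ × ℝ) :
    grushinGradSq u p / 2 + W (u p) = p.1 ^ 2 * pY u p ^ 2 - currentY W u p := by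
  rw [grushinGradSq, currentY]
  ring

theorem grushinGradSq_comp_add_snd (u : ℝ × ℝ → ℝ) (t : ℝ) (p : ℝ × ℝ) :
    grushinGradSq (fun q => u (q.1, q.2 + t)) p = grushinGradSq u (p.1, p.2 + t) := by
  rw [grushinGradSq, grushinGradSq, pY, pY, deriv_comp_add_const (fun y => u (p.1, y))]
  rfl

theorem abs_pX_le_sqrt_grushinGradSq (u : ℝ × ℝ → ℝ) (p : ℝ × ℝ) :
    |pX u p| ≤ √(grushinGradSq u p) :=
  Real.abs_le_sqrt (le_add_of_nonneg_right (by positivity))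

theorem abs_fst_mul_pY_le_sqrt_grushinGradSq (u : ℝ × ℝ → ℝ) (p : ℝ × ℝ) :
    |p.1 * pY u p| ≤ √(grushinGradSq u p) :=
  Real.abs_le_sqrt (by rw [grushinGradSq, mul_pow]; exact le_add_of_nonneg_left (sq_nonneg _))

/-- translated energy comparison. If `u ∈ C²(ℝ², [−1,1])`, with
`|∇_G u| ≤ K` everywhere, solves `Δ_G u = W'(u)` in `ℝ²` and `∂_y u > 0`, then with
`u^t(x,y) := u(x, y+t)` and `E_R(t) := ∫_{B_R(0)} (|∇_G u^t|²/2 + W(u^t))`, there is a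
constant `C > 0` depending only on `W` and `K` such that `E_R(0) ≤ E_R(t) + C R²` for
every `t ∈ ℝ` and `R > 0`. -/
theorem translated_energy_comparison (W : ℝ → ℝ) (hW : DoubleWell W) (K : ℝ) :
    ∃ C > (0 : ℝ), ∀ u : ℝ × ℝ → ℝ, ContDiff ℝ 2 u →
      (∀ p : ℝ × ℝ, u p ∈ Set.Icc (-1 : ℝ) 1) →
      (∀ p : ℝ × ℝ, Real.sqrt (grushinGradSq u p) ≤ K) →
      (∀ p : ℝ × ℝ, grushinLap u p = deriv W (u p)) →
      (∀ p : ℝ × ℝ, 0 < pY u p) →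
      ∀ (t R : ℝ), 0 < R →
        (∫ p in gBall 0 R, (grushinGradSq u p / 2 + W (u p))) ≤
          (∫ p in gBall 0 R,
            (grushinGradSq (fun q => u (q.1, q.2 + t)) p / 2 + W (u (p.1, p.2 + t)))) +
          C * R ^ 2 := by
  refine ⟨8 * |K| + 1, by positivity, fun u hu hrange hgrad hpde hQ t R hR => ?_⟩
  have hW' : Differentiable ℝ W := hW.1.differentiable (by norm_num)
  have hPK : ∀ p, |pX u p| ≤ K := fun p => (abs_pX_le_sqrt_grushinGradSq u p).trans (hgrad p)
  have hxQK : ∀ p : ℝ × ℝ, |p.1 * pY u p| ≤ K := fun p =>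
    (abs_fst_mul_pY_le_sqrt_grushinGradSq u p).trans (hgrad p)
  have hK : 0 ≤ K := (abs_nonneg _).trans (hPK 0)
  have hQ' : ∀ p, 0 ≤ pY u p := fun p => (hQ p).le
  have hJ := (differentiable_currentY hu hW').continuous
  have hcQ := continuous_pY (hu.of_le (by norm_num))
  have hint : ∀ f : ℝ × ℝ → ℝ, Continuous f → IntegrableOn f (gBall 0 R) := fun f hf =>
    hf.integrableOn_gBall_zero hR
  have hkin : ∫ p in gBall 0 R, p.1 ^ 2 * pY u p ^ 2 ≤ 4 * K * R ^ 2 :=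
    setIntegral_gBall_zero_sq_mul_pY_sq_le (hu.of_le (by norm_num)) hrange hxQK hQ' hR
  have hkin_t : 0 ≤ ∫ p in gBall 0 R, p.1 ^ 2 * pY u (p.1, p.2 + t) ^ 2 :=
    setIntegral_nonneg (isOpen_gBall 0 R).measurableSet fun _ _ => by positivity
  have hflux : ∫ p in gBall 0 R, (currentY W u (p.1, p.2 + t) - currentY W u p) ≤
      4 * K * R ^ 2 :=
    setIntegral_gBall_zero_le hR (by fun_prop) fun y l =>
      integral_currentY_shift_sub_le hu hW' hpde hrange hPK hQ' t y l
  simp only [grushinGradSq_comp_add_snd, grushinGradSq_div_two_add_eq]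
  rw [integral_sub (hint _ (by fun_prop)) (hint _ (by fun_prop)),
    integral_sub (hint _ (by fun_prop)) (hint _ (by fun_prop))]
  rw [integral_sub (hint _ (by fun_prop)) (hint _ (by fun_prop))] at hflux
  rw [abs_of_nonneg hK]
  nlinarith
end
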